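/- arXiv:2508.07516 — 9 statements merged into one kernel-verified Lean document; each statement's English description precedes it below -/
import Mathlib

section
/- Let B be a cluster of size m given by b : Fin m → (Fin n → ℝ) with m ≥ 1, let i₀ : Fin m, let y = b i₀, let x : Fin n → ℝ, and let b' = Function.update b i₀ x, with centers b̄ and b̄' respectively. Then for every element v of the new cluster (i.e., v = b' j for some j : Fin m) one has d(v, b̄') = d(v, b̄) + (1/m²)·d(x, y) + (2/n) ∑_{k} (y k − x k)·(v k − b̄ k)/m. -/
/-- The (squared Wasserstein) distance between two step functions with `n` steps:
`d f g = (1/n) ∑ k, (f k - g k)^2`. -/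
noncomputable def stepDist (n : ℕ) (f g : Fin n → ℝ) : ℝ :=
  (1 / (n : ℝ)) * ∑ k, (f k - g k) ^ 2

/-- Proposition A2: for every element `v = b' j` of the new cluster,
`d(v, b̄') = d(v, b̄) + (1/m²)·d(x, y) + (2/n) ∑ k (y k - x k)(v k - b̄ k)/m`. -/
theorem dist_to_new_center (n m : ℕ) (hn : 1 ≤ n) (hm : 1 ≤ m)
    (b : Fin m → Fin n → ℝ) (i₀ : Fin m) (x : Fin n → ℝ)
    (y : Fin n → ℝ) (hy : y = b i₀)
    (b' : Fin m → Fin n → ℝ) (hb' : b' = Function.update b i₀ x)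
    (center center' : Fin n → ℝ)
    (hc : ∀ k, center k = (1 / (m : ℝ)) * ∑ i, b i k)
    (hc' : ∀ k, center' k = (1 / (m : ℝ)) * ∑ i, b' i k) :
    ∀ j : Fin m,
      stepDist n (b' j) center'
        = stepDist n (b' j) center + (1 / (m : ℝ) ^ 2) * stepDist n x y
          + (2 / (n : ℝ)) * ∑ k, (y k - x k) * (b' j k - center k) / m := by
  intro j
  have hm0 : (m : ℝ) ≠ 0 := by positivity
  have hsum : ∀ k, ∑ i, b' i k = (∑ i, b i k) + (x k - y k) := by
    intro k
    have : ∀ i, b' i k = Function.update (fun i => b i k) i₀ (x k) i := by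
      intro i; rw [hb']; simp [Function.update]; split <;> simp_all
    simp only [this]
    rw [Finset.sum_update_of_mem (Finset.mem_univ i₀), hy]
    rw [Finset.sum_eq_sum_sdiff_singleton_add (Finset.mem_univ i₀) (fun i => b i k)]
    ring
  have hcc : ∀ k, center' k = center k + (x k - y k) / m := by
    intro k
    rw [hc', hc, hsum k]
    field_simp
  have key : ∀ k, (b' j k - center' k) ^ 2
      = (b' j k - center k) ^ 2 + (1 / (m : ℝ) ^ 2) * (x k - y k) ^ 2
        + 2 * ((y k - x k) * (b' j k - center k) / m) := by
    intro k
    rw [hcc k]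
    field_simp
    ring
  simp only [stepDist, key, Finset.sum_add_distrib, ← Finset.mul_sum]
  ring
end

section
/- Let B be a cluster of size m given by b : Fin m → (Fin n → ℝ) with m ≥ 1, let i₀ : Fin m, let y = b i₀, let x : Fin n → ℝ, and let b' = Function.update b i₀ x. Let r and r' be the variances of b and b', and b̄ the center of b. Then r' = r + (1/m)·[d(x, b̄) − d(y, b̄) − (1/m)·d(x, y)]. -/
lemma sum_sq_dev (m : ℕ) (a : Fin m → ℝ) (c : ℝ) (hc : (m : ℝ) * c = ∑ i, a i) :
    ∑ i, (a i - c) ^ 2 = (∑ i, (a i) ^ 2) - (m : ℝ) * c ^ 2 := by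
  have : ∑ i, (a i - c) ^ 2 = ∑ i, ((a i) ^ 2 - 2 * c * a i + c ^ 2) := by
    refine Finset.sum_congr rfl fun i _ => by ring
  rw [this]
  rw [Finset.sum_add_distrib, Finset.sum_sub_distrib, ← Finset.mul_sum, ← hc,
    Finset.sum_const, Finset.card_univ, Fintype.card_fin, nsmul_eq_mul]
  ring

lemma key (m : ℕ) (hm : 1 ≤ m) (a : Fin m → ℝ) (i₀ : Fin m) (X : ℝ)
    (c c' : ℝ) (hc : c = (1 / (m : ℝ)) * ∑ i, a i)
    (hc' : c' = (1 / (m : ℝ)) * ∑ i, Function.update a i₀ X i) :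
    ∑ i, (Function.update a i₀ X i - c') ^ 2
      = (∑ i, (a i - c) ^ 2)
        + ((X - c) ^ 2 - (a i₀ - c) ^ 2 - (1 / (m : ℝ)) * (X - a i₀) ^ 2) := by
  have hm0 : (m : ℝ) ≠ 0 := by positivity
  set S : ℝ := ∑ i, a i with hS
  have hsum : ∑ i, Function.update a i₀ X i = S + X - a i₀ := by
    rw [Finset.sum_update_of_mem (Finset.mem_univ i₀)]
    rw [show (Finset.univ \ {i₀}) = Finset.univ.erase i₀ by
      simp [Finset.sdiff_singleton_eq_erase]]
    rw [Finset.sum_erase_eq_sub (Finset.mem_univ i₀)]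
    ring
  have hsumsq : ∑ i, (Function.update a i₀ X i) ^ 2 = (∑ i, (a i) ^ 2) + X ^ 2 - (a i₀) ^ 2 := by
    rw [show (fun i => (Function.update a i₀ X i) ^ 2)
        = Function.update (fun i => (a i) ^ 2) i₀ (X ^ 2) by
      funext i
      rcases eq_or_ne i i₀ with h | h <;> simp [h, Function.update]]
    rw [Finset.sum_update_of_mem (Finset.mem_univ i₀)]
    rw [show (Finset.univ \ {i₀}) = Finset.univ.erase i₀ by
      simp [Finset.sdiff_singleton_eq_erase]]
    rw [Finset.sum_erase_eq_sub (Finset.mem_univ i₀)]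
    ring
  have h1 : ∑ i, (a i - c) ^ 2 = (∑ i, (a i) ^ 2) - (m : ℝ) * c ^ 2 :=
    sum_sq_dev m a c (by rw [hc]; field_simp; exact hS)
  have h2 : ∑ i, (Function.update a i₀ X i - c') ^ 2
      = (∑ i, (Function.update a i₀ X i) ^ 2) - (m : ℝ) * c' ^ 2 :=
    sum_sq_dev m _ c' (by rw [hc']; field_simp)
  rw [h2, hsumsq, h1, hc, hc', hsum]
  field_simp
  ring

/-- Proposition A4: the variance of the new cluster is
`r' = r + (1/m)·[d(x, b̄) − d(y, b̄) − (1/m)·d(x, y)]`. -/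
theorem variance_shift (n m : ℕ) (hn : 1 ≤ n) (hm : 1 ≤ m)
    (b : Fin m → Fin n → ℝ) (i₀ : Fin m) (x : Fin n → ℝ)
    (y : Fin n → ℝ) (hy : y = b i₀)
    (b' : Fin m → Fin n → ℝ) (hb' : b' = Function.update b i₀ x)
    (center center' : Fin n → ℝ)
    (hc : ∀ k, center k = (1 / (m : ℝ)) * ∑ i, b i k)
    (hc' : ∀ k, center' k = (1 / (m : ℝ)) * ∑ i, b' i k)
    (r r' : ℝ)
    (hr : r = (1 / (m : ℝ)) * ∑ i, stepDist n (b i) center)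
    (hr' : r' = (1 / (m : ℝ)) * ∑ i, stepDist n (b' i) center') :
    r' = r + (1 / (m : ℝ)) *
      (stepDist n x center - stepDist n y center - (1 / (m : ℝ)) * stepDist n x y) := by
  have hupd : ∀ i k, b' i k = Function.update (fun j => b j k) i₀ (x k) i := by
    intro i k
    rcases eq_or_ne i i₀ with h | h <;> simp [hb', h, Function.update]
  -- per-k identity
  have hk : ∀ k, ∑ i, (b' i k - center' k) ^ 2
      = (∑ i, (b i k - center k) ^ 2)
        + ((x k - center k) ^ 2 - (y k - center k) ^ 2
          - (1 / (m : ℝ)) * (x k - y k) ^ 2) := by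
    intro k
    have := key m hm (fun j => b j k) i₀ (x k) (center k) (center' k) (hc k)
      (by rw [hc' k]; congr 1; exact Finset.sum_congr rfl fun i _ => (hupd i k))
    simpa [hy, ← hupd] using this
  -- rewrite r' and r as double sums over k then i
  have swap : ∀ (f : Fin m → Fin n → ℝ) (c : Fin n → ℝ),
      ∑ i, stepDist n (f i) c = (1 / (n : ℝ)) * ∑ k, ∑ i, (f i k - c k) ^ 2 := by
    intro f c
    simp only [stepDist, ← Finset.mul_sum]
    rw [Finset.sum_comm]
  rw [hr', hr, swap, swap, stepDist, stepDist, stepDist]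
  rw [show (∑ k, ∑ i, (b' i k - center' k) ^ 2)
      = (∑ k, ∑ i, (b i k - center k) ^ 2)
        + ((∑ k, (x k - center k) ^ 2) - (∑ k, (y k - center k) ^ 2)
          - (1 / (m : ℝ)) * ∑ k, (x k - y k) ^ 2) by
    rw [Finset.mul_sum, ← Finset.sum_sub_distrib, ← Finset.sum_sub_distrib,
      ← Finset.sum_add_distrib]
    exact Finset.sum_congr rfl fun k _ => by rw [hk k]]
  ring
end

section
/- Let s, a : Fin m → (Fin n → ℝ) be two clusters of equal size m ≥ 1 (the stereotype and anti-stereotype clusters), with centers s̄ and ā and variances r_S and r_A, and let r_I ∈ ℝ with r_I ≠ 0 (the variance of the irrelevant cluster). Define the Wasserstein bias statistic S = (r_A − r_S)/r_I. Fix i₀, j₀ : Fin m, set x = s i₀ and y = a j₀, and form the swapped clusters s' = Function.update s i₀ y and a' = Function.update a j₀ x, with variances r'_S and r'_A, and new statistic S' = (r'_A − r'_S)/r_I. Then S' = S + (1/(m·r_I))·[d(x, ā) + d(x, s̄) − d(y, ā) − d(y, s̄)]. -/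
open Finset

/-- The center of a cluster `b : Fin m → Fin n → ℝ`. -/
noncomputable def clusterCenter (n m : ℕ) (b : Fin m → Fin n → ℝ) : Fin n → ℝ :=
  fun k => (1 / (m : ℝ)) * ∑ i, b i k

/-- The variance of a cluster `b : Fin m → Fin n → ℝ`. -/
noncomputable def clusterVar (n m : ℕ) (b : Fin m → Fin n → ℝ) : ℝ :=
  (1 / (m : ℝ)) * ∑ i, stepDist n (b i) (clusterCenter n m b)

lemma sum_update' (m : ℕ) (v : Fin m → ℝ) (i₀ : Fin m) (t : ℝ) :
    ∑ i, Function.update v i₀ t i = ∑ i, v i + t - v i₀ := by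
  rw [Finset.sum_update_of_mem (mem_univ i₀)]
  rw [Finset.sum_eq_sum_sdiff_singleton_add (mem_univ i₀) v]
  ring

lemma sum_sq_sub_mean (m : ℕ) (hm : 1 ≤ m) (w : Fin m → ℝ) :
    ∑ i, (w i - (1 / (m:ℝ)) * ∑ j, w j) ^ 2
      = ∑ i, (w i) ^ 2 - (1 / (m:ℝ)) * (∑ i, w i) ^ 2 := by
  have hm' : (m:ℝ) ≠ 0 := Nat.cast_ne_zero.2 (by omega)
  have h : ∀ i ∈ univ, (w i - (1 / (m:ℝ)) * ∑ j, w j) ^ 2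
      = (w i) ^ 2 - (2 * (1 / (m:ℝ)) * ∑ j, w j) * w i + ((1 / (m:ℝ)) * ∑ j, w j) ^ 2 := by
    intro i _; ring
  rw [Finset.sum_congr rfl h, Finset.sum_add_distrib, Finset.sum_sub_distrib,
    ← Finset.mul_sum, Finset.sum_const, card_univ, Fintype.card_fin, nsmul_eq_mul]
  field_simp
  ring

lemma scalar_key (m : ℕ) (hm : 1 ≤ m) (v : Fin m → ℝ) (i₀ : Fin m) (t : ℝ) :
    ∑ i, (Function.update v i₀ t i - (1 / (m:ℝ)) * ∑ j, Function.update v i₀ t j) ^ 2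
      = ∑ i, (v i - (1 / (m:ℝ)) * ∑ j, v j) ^ 2
        + (t - (1 / (m:ℝ)) * ∑ j, v j) ^ 2
        - (v i₀ - (1 / (m:ℝ)) * ∑ j, v j) ^ 2
        - (1 / (m:ℝ)) * (t - v i₀) ^ 2 := by
  have hm' : (m:ℝ) ≠ 0 := Nat.cast_ne_zero.2 (by omega)
  have hsq : ∑ i, (Function.update v i₀ t i) ^ 2
      = ∑ i, (v i) ^ 2 + t ^ 2 - (v i₀) ^ 2 := by
    have : ∀ i, (Function.update v i₀ t i) ^ 2
        = Function.update (fun j => (v j) ^ 2) i₀ (t ^ 2) i := fun i =>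
      (Function.apply_update (fun _ z => z ^ 2) v i₀ t i)
    simp_rw [this]
    exact sum_update' m (fun j => (v j) ^ 2) i₀ (t ^ 2)
  rw [sum_sq_sub_mean m hm, sum_sq_sub_mean m hm, hsq, sum_update' m v i₀ t]
  field_simp
  ring

lemma var_update (n m : ℕ) (hm : 1 ≤ m) (b : Fin m → Fin n → ℝ) (i₀ : Fin m) (y : Fin n → ℝ) :
    clusterVar n m (Function.update b i₀ y)
      = clusterVar n m b
        + (1 / (m:ℝ)) * (stepDist n y (clusterCenter n m b)
            - stepDist n (b i₀) (clusterCenter n m b))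
        - (1 / (m:ℝ) ^ 2) * stepDist n y (b i₀) := by
  have hm' : (m:ℝ) ≠ 0 := Nat.cast_ne_zero.2 (by omega)
  have hup : ∀ i k, Function.update b i₀ y i k = Function.update (fun j => b j k) i₀ (y k) i :=
    fun i k => Function.apply_update (fun _ g => g k) b i₀ y i
  unfold clusterVar stepDist clusterCenter
  simp_rw [hup]
  simp only [← Finset.mul_sum]
  rw [Finset.sum_comm]
  rw [Finset.sum_congr rfl (fun k _ => scalar_key m hm (fun j => b j k) i₀ (y k))]
  rw [Finset.sum_sub_distrib, Finset.sum_sub_distrib, Finset.sum_add_distrib,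
    ← Finset.mul_sum]
  rw [show (Finset.sum Finset.univ fun k => ∑ i, (b i k - 1 / (m:ℝ) * ∑ j, b j k) ^ 2)
      = ∑ i, ∑ k, (b i k - 1 / (m:ℝ) * ∑ j, b j k) ^ 2 from Finset.sum_comm]
  ring

lemma stepDist_comm (n : ℕ) (f g : Fin n → ℝ) : stepDist n f g = stepDist n g f := by
  unfold stepDist
  congr 1
  exact Finset.sum_congr rfl fun k _ => by ring

/-- Proposition A5: swapping `x = s i₀` with `y = a j₀` changes the Wasserstein
bias statistic `S = (r_A - r_S)/r_I` to
`S' = S + (1/(m·r_I))·[d(x, ā) + d(x, s̄) − d(y, ā) − d(y, s̄)]`. -/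
theorem bias_statistic_shift (n m : ℕ) (hn : 1 ≤ n) (hm : 1 ≤ m)
    (s a : Fin m → Fin n → ℝ) (rI : ℝ) (hrI : rI ≠ 0)
    (i₀ j₀ : Fin m) (x y : Fin n → ℝ) (hx : x = s i₀) (hy : y = a j₀)
    (s' a' : Fin m → Fin n → ℝ)
    (hs' : s' = Function.update s i₀ y) (ha' : a' = Function.update a j₀ x)
    (S S' : ℝ)
    (hS : S = (clusterVar n m a - clusterVar n m s) / rI)
    (hS' : S' = (clusterVar n m a' - clusterVar n m s') / rI) :
    S' = S + (1 / ((m : ℝ) * rI)) *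
      (stepDist n x (clusterCenter n m a) + stepDist n x (clusterCenter n m s)
        - stepDist n y (clusterCenter n m a) - stepDist n y (clusterCenter n m s)) := by
  have hm' : (m:ℝ) ≠ 0 := Nat.cast_ne_zero.2 (by omega)
  subst hs' ha' hS hS' hx hy
  rw [var_update n m hm s i₀ (a j₀), var_update n m hm a j₀ (s i₀)]
  rw [stepDist_comm n (s i₀) (a j₀)]
  rw [stepDist_comm n (s i₀) (clusterCenter n m s),
      stepDist_comm n (a j₀) (clusterCenter n m a)]
  field_simp
  ring
end

section
/- Let A : Fin n × Fin n → ℝ be a matrix with n ≥ 1, let Ā = (1/n²) ∑_{(s,τ)} A (s,τ), and fix 1 ≤ t ≤ n. Then the average over all swaps M of length t of the total change W(M) = ∑_{(i,j) ∈ M} A (i,j) equals t·Ā; equivalently, ∑_{M swap of length t} ∑_{(i,j) ∈ M} A (i,j) = C(n,t)² · t! · t · Ā. -/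
open Finset

namespace SwapAux

variable {n : ℕ}

lemma swap_exu {M : Finset (Fin n × Fin n)}
    (hM : ∀ p ∈ M, ∀ q ∈ M, p ≠ q → p.1 ≠ q.1 ∧ p.2 ≠ q.2)
    {r : Fin n} (hr : r ∈ M.image Prod.fst) :
    ∃! p, p ∈ M ∧ p.1 = r := by
  obtain ⟨p, hp, hp1⟩ := Finset.mem_image.mp hr
  refine ⟨p, ⟨hp, hp1⟩, ?_⟩
  rintro q ⟨hq, hq1⟩
  by_contra h
  exact (hM q hq p hp h).1 (hq1.trans hp1.symm)

def swapEmb (M : Finset (Fin n × Fin n))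
    (hM : ∀ p ∈ M, ∀ q ∈ M, p ≠ q → p.1 ≠ q.1 ∧ p.2 ≠ q.2) :
    ↥(M.image Prod.fst) ↪ Fin n where
  toFun r := (Finset.choose (fun p => p.1 = r.1) M (swap_exu hM r.2)).2
  inj' := by
    rintro ⟨r, hr⟩ ⟨r', hr'⟩ h
    simp only at h
    have h1 := Finset.choose_spec (fun p => p.1 = r) M (swap_exu hM hr)
    have h2 := Finset.choose_spec (fun p => p.1 = r') M (swap_exu hM hr')
    have hc : Finset.choose (fun p => p.1 = r) M (swap_exu hM hr)
        = Finset.choose (fun p => p.1 = r') M (swap_exu hM hr') := by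
      by_contra hne
      exact (hM _ h1.1 _ h2.1 hne).2 h
    apply Subtype.ext
    show r = r'
    rw [← h1.2, ← h2.2, hc]

def buildM (x : Σ R : Finset (Fin n), (↥R ↪ Fin n)) : Finset (Fin n × Fin n) :=
  x.1.attach.image (fun r => (r.1, x.2 r))

lemma recon (M : Finset (Fin n × Fin n))
    (hM : ∀ p ∈ M, ∀ q ∈ M, p ≠ q → p.1 ≠ q.1 ∧ p.2 ≠ q.2) :
    buildM ⟨M.image Prod.fst, swapEmb M hM⟩ = M := by
  ext p
  constructor
  · intro hp
    rw [buildM] at hp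
    obtain ⟨r, -, rfl⟩ := Finset.mem_image.mp hp
    have h1 := Finset.choose_spec (fun q => q.1 = r.1) M (swap_exu hM r.2)
    have heq : ((r.1, swapEmb M hM r) : Fin n × Fin n)
        = Finset.choose (fun q => q.1 = r.1) M (swap_exu hM r.2) :=
      Prod.ext h1.2.symm rfl
    rw [heq]
    exact h1.1
  · intro hp
    have hmem : p.1 ∈ M.image Prod.fst := Finset.mem_image_of_mem Prod.fst hp
    have hu := swap_exu hM hmem
    have h1 := Finset.choose_spec (fun q => q.1 = p.1) M hu
    have heq : Finset.choose (fun q => q.1 = p.1) M hu = p :=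
      hu.unique ⟨h1.1, h1.2⟩ ⟨hp, rfl⟩
    rw [buildM, Finset.mem_image]
    refine ⟨⟨p.1, hmem⟩, Finset.mem_attach _ _, ?_⟩
    refine Prod.ext rfl ?_
    show (Finset.choose (fun q => q.1 = p.1) M (swap_exu hM hmem)).2 = p.2
    exact congrArg Prod.snd heq

lemma buildM_card (x : Σ R : Finset (Fin n), (↥R ↪ Fin n)) :
    (buildM x).card = x.1.card := by
  rw [buildM, Finset.card_image_of_injective, Finset.card_attach]
  intro a b h
  exact Subtype.ext (congrArg Prod.fst h)

lemma buildM_swap (x : Σ R : Finset (Fin n), (↥R ↪ Fin n)) :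
    ∀ p ∈ buildM x, ∀ q ∈ buildM x, p ≠ q → p.1 ≠ q.1 ∧ p.2 ≠ q.2 := by
  rintro p hp q hq hne
  rw [buildM] at hp hq
  obtain ⟨a, -, rfl⟩ := Finset.mem_image.mp hp
  obtain ⟨b, -, rfl⟩ := Finset.mem_image.mp hq
  have hab : a ≠ b := fun h => hne (by rw [h])
  exact ⟨fun h => hab (Subtype.ext h), fun h => hab (x.2.injective h)⟩

lemma sigma_eq {R : Finset (Fin n)} {f : ↥R ↪ Fin n} {M : Finset (Fin n × Fin n)}
    (hM : ∀ p ∈ M, ∀ q ∈ M, p ≠ q → p.1 ≠ q.1 ∧ p.2 ≠ q.2)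
    (h1 : M.image Prod.fst = R)
    (h2 : ∀ (x : Fin n) (hx : x ∈ M.image Prod.fst) (hx' : x ∈ R),
      swapEmb M hM ⟨x, hx⟩ = f ⟨x, hx'⟩) :
    (⟨M.image Prod.fst, swapEmb M hM⟩ : Σ R : Finset (Fin n), (↥R ↪ Fin n)) = ⟨R, f⟩ := by
  subst h1
  exact congrArg _ (Function.Embedding.ext fun x => h2 x.1 x.2 x.2)

lemma swap_card (n t : ℕ) :
    (Finset.univ.filter (fun M : Finset (Fin n × Fin n) =>
        M.card = t ∧ ∀ p ∈ M, ∀ q ∈ M, p ≠ q → p.1 ≠ q.1 ∧ p.2 ≠ q.2)).card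
      = n.choose t ^ 2 * t.factorial := by
  classical
  have hcard := Finset.card_bij
    (s := Finset.univ.filter (fun M : Finset (Fin n × Fin n) =>
        M.card = t ∧ ∀ p ∈ M, ∀ q ∈ M, p ≠ q → p.1 ≠ q.1 ∧ p.2 ≠ q.2))
    (t := (Finset.powersetCard t (Finset.univ : Finset (Fin n))).sigma
        (fun R => (Finset.univ : Finset (↥R ↪ Fin n))))
    (fun M hM => ⟨M.image Prod.fst,
        swapEmb M (Finset.mem_filter.mp hM).2.2⟩)
    (by
      intro M hM
      obtain ⟨-, hc, hs⟩ := Finset.mem_filter.mp hM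
      rw [Finset.mem_sigma, Finset.mem_powersetCard]
      refine ⟨⟨Finset.subset_univ _, ?_⟩, Finset.mem_univ _⟩
      rw [Finset.card_image_of_injOn, hc]
      intro p hp q hq h
      by_contra hne
      exact (hs p hp q hq hne).1 h)
    (by
      intro M hM M' hM' h
      have := congrArg buildM h
      rwa [recon, recon] at this)
    (by
      rintro ⟨R, f⟩ hb
      rw [Finset.mem_sigma, Finset.mem_powersetCard] at hb
      refine ⟨buildM ⟨R, f⟩, ?_, ?_⟩
      · rw [Finset.mem_filter]
        exact ⟨Finset.mem_univ _, by rw [buildM_card]; exact hb.1.2,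
          buildM_swap _⟩
      · refine sigma_eq _ ?_ ?_
        · rw [buildM, Finset.image_image]
          exact Finset.attach_image_val
        · intro x hx hx'
          have hu := swap_exu (buildM_swap (⟨R, f⟩ : Σ R : Finset (Fin n), (↥R ↪ Fin n))) hx
          have hmem : ((x, f ⟨x, hx'⟩) : Fin n × Fin n) ∈ buildM ⟨R, f⟩ := by
            rw [buildM, Finset.mem_image]
            exact ⟨⟨x, hx'⟩, Finset.mem_attach _ _, rfl⟩
          have h1 := Finset.choose_spec (fun q : Fin n × Fin n => q.1 = x) _ hu
          have heq := hu.unique ⟨h1.1, h1.2⟩ ⟨hmem, rfl⟩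
          show (Finset.choose (fun q => q.1 = x) (buildM ⟨R, f⟩) hu).2 = f ⟨x, hx'⟩
          rw [heq])
  rw [hcard, Finset.card_sigma]
  have : ∀ R ∈ Finset.powersetCard t (Finset.univ : Finset (Fin n)),
      (Finset.univ : Finset (↥R ↪ Fin n)).card = n.descFactorial t := by
    intro R hR
    rw [Finset.mem_powersetCard] at hR
    rw [Finset.card_univ, Fintype.card_embedding_eq, Fintype.card_coe, hR.2,
      Fintype.card_fin]
  rw [Finset.sum_congr rfl this, Finset.sum_const, smul_eq_mul,
    Finset.card_powersetCard, Finset.card_univ, Fintype.card_fin,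
    Nat.descFactorial_eq_factorial_mul_choose]
  ring



lemma image_mem_swaps (σ τ : Equiv.Perm (Fin n)) {t : ℕ} {M : Finset (Fin n × Fin n)}
    (h1 : M.card = t) (h2 : ∀ p ∈ M, ∀ q ∈ M, p ≠ q → p.1 ≠ q.1 ∧ p.2 ≠ q.2) :
    (M.image (Prod.map σ τ)).card = t ∧
      ∀ p ∈ M.image (Prod.map σ τ), ∀ q ∈ M.image (Prod.map σ τ),
        p ≠ q → p.1 ≠ q.1 ∧ p.2 ≠ q.2 := by
  have hinj : Function.Injective (Prod.map σ τ : Fin n × Fin n → Fin n × Fin n) :=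
    Function.Injective.prodMap σ.injective τ.injective
  constructor
  · rw [Finset.card_image_of_injective _ hinj, h1]
  · rintro p hp q hq hne
    obtain ⟨a, ha, rfl⟩ := Finset.mem_image.mp hp
    obtain ⟨b, hb, rfl⟩ := Finset.mem_image.mp hq
    have hab : a ≠ b := fun h => hne (by rw [h])
    obtain ⟨ha1, ha2⟩ := h2 a ha b hb hab
    exact ⟨fun h => ha1 (σ.injective h), fun h => ha2 (τ.injective h)⟩

lemma count_eq (t : ℕ) (p q : Fin n × Fin n) :
    ((Finset.univ.filter (fun M : Finset (Fin n × Fin n) =>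
        M.card = t ∧ ∀ p ∈ M, ∀ q ∈ M, p ≠ q → p.1 ≠ q.1 ∧ p.2 ≠ q.2)).filter
      (fun M => p ∈ M)).card
    = ((Finset.univ.filter (fun M : Finset (Fin n × Fin n) =>
        M.card = t ∧ ∀ p ∈ M, ∀ q ∈ M, p ≠ q → p.1 ≠ q.1 ∧ p.2 ≠ q.2)).filter
      (fun M => q ∈ M)).card := by
  classical
  set σ := Equiv.swap p.1 q.1 with hσ
  set τ := Equiv.swap p.2 q.2 with hτ
  have hselfinv : ∀ x : Fin n × Fin n, Prod.map σ τ (Prod.map σ τ x) = x := by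
    intro x
    simp [Prod.map, σ, τ, Equiv.swap_apply_self]
  have himg : ∀ M : Finset (Fin n × Fin n),
      (M.image (Prod.map σ τ)).image (Prod.map σ τ) = M := by
    intro M
    rw [Finset.image_image]
    have : (Prod.map σ τ ∘ Prod.map σ τ : Fin n × Fin n → Fin n × Fin n) = id :=
      funext hselfinv
    rw [this, Finset.image_id]
  refine Finset.card_nbij' (fun M => M.image (Prod.map σ τ))
    (fun M => M.image (Prod.map σ τ)) ?_ ?_ (fun M _ => himg M) (fun M _ => himg M)
  · intro M hM
    rw [Finset.mem_coe, Finset.mem_filter, Finset.mem_filter] at hM ⊢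
    obtain ⟨⟨-, h1, h2⟩, hp⟩ := hM
    obtain ⟨hc, hs⟩ := image_mem_swaps σ τ h1 h2
    refine ⟨⟨Finset.mem_univ _, hc, hs⟩, ?_⟩
    have : Prod.map σ τ p = q := by
      simp [Prod.map, σ, τ, Equiv.swap_apply_left]
    rw [← this]
    exact Finset.mem_image_of_mem _ hp
  · intro M hM
    rw [Finset.mem_coe, Finset.mem_filter, Finset.mem_filter] at hM ⊢
    obtain ⟨⟨-, h1, h2⟩, hq⟩ := hM
    obtain ⟨hc, hs⟩ := image_mem_swaps σ τ h1 h2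
    refine ⟨⟨Finset.mem_univ _, hc, hs⟩, ?_⟩
    have : Prod.map σ τ q = p := by
      simp [Prod.map, σ, τ, Equiv.swap_apply_right]
    rw [← this]
    exact Finset.mem_image_of_mem _ hq



end SwapAux

open SwapAux in
/-- Proposition B2: the average, over all swaps `M` of length `t`, of the total
change `W(M) = ∑_{(i,j) ∈ M} A (i,j)` is `t·Ā`; equivalently, the sum over all
such swaps equals `C(n,t)² · t! · t · Ā`, where `Ā` is the mean entry of `A`. -/
theorem swap_sum_mean (n t : ℕ) (hn : 1 ≤ n) (ht1 : 1 ≤ t) (ht2 : t ≤ n)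
    (A : Fin n × Fin n → ℝ)
    (Abar : ℝ) (hAbar : Abar = (1 / (n : ℝ) ^ 2) * ∑ p, A p) :
    ∑ M ∈ Finset.univ.filter (fun M : Finset (Fin n × Fin n) =>
        M.card = t ∧ ∀ p ∈ M, ∀ q ∈ M, p ≠ q → p.1 ≠ q.1 ∧ p.2 ≠ q.2),
      ∑ p ∈ M, A p
      = (n.choose t ^ 2 * t.factorial : ℕ) * ((t : ℝ) * Abar) := by
  classical
  set S := Finset.univ.filter (fun M : Finset (Fin n × Fin n) =>
      M.card = t ∧ ∀ p ∈ M, ∀ q ∈ M, p ≠ q → p.1 ≠ q.1 ∧ p.2 ≠ q.2) with hS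
  set p0 : Fin n × Fin n := (⟨0, hn⟩, ⟨0, hn⟩) with hp0
  set N := (S.filter (fun M => p0 ∈ M)).card with hN
  have hconst : ∀ p : Fin n × Fin n, (S.filter (fun M => p ∈ M)).card = N :=
    fun p => count_eq t p p0
  have hdouble : ∑ p : Fin n × Fin n, (S.filter (fun M => p ∈ M)).card
      = t * S.card := by
    have h1 : ∀ p : Fin n × Fin n, (S.filter (fun M => p ∈ M)).card
        = ∑ M ∈ S, if p ∈ M then 1 else 0 := fun p => Finset.card_filter _ _
    rw [Finset.sum_congr rfl (fun p _ => h1 p), Finset.sum_comm]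
    have h2 : ∀ M ∈ S, (∑ p : Fin n × Fin n, if p ∈ M then 1 else 0) = t := by
      intro M hM
      rw [Finset.sum_ite_mem, Finset.univ_inter, Finset.sum_const, smul_eq_mul,
        mul_one]
      exact (Finset.mem_filter.mp hM).2.1
    rw [Finset.sum_congr rfl h2, Finset.sum_const, smul_eq_mul, mul_comm]
  have hkey : n ^ 2 * N = t * (n.choose t ^ 2 * t.factorial) := by
    have h1 : ∑ p : Fin n × Fin n, (S.filter (fun M => p ∈ M)).card
        = n ^ 2 * N := by
      rw [Finset.sum_congr rfl (fun p _ => hconst p), Finset.sum_const,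
        smul_eq_mul, Finset.card_univ, Fintype.card_prod, Fintype.card_fin]
      ring
    rw [← h1, hdouble, hS, swap_card]
  have hLHS : ∑ M ∈ S, ∑ p ∈ M, A p = (N : ℝ) * ∑ p, A p := by
    have h2 : ∀ M ∈ S, ∑ p ∈ M, A p
        = ∑ p : Fin n × Fin n, if p ∈ M then A p else 0 := by
      intro M _
      rw [Finset.sum_ite_mem, Finset.univ_inter]
    rw [Finset.sum_congr rfl h2, Finset.sum_comm]
    have h3 : ∀ p : Fin n × Fin n,
        (∑ M ∈ S, if p ∈ M then A p else 0) = (N : ℝ) * A p := by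
      intro p
      rw [← Finset.sum_filter, Finset.sum_const, hconst p, nsmul_eq_mul]
    rw [Finset.sum_congr rfl (fun p _ => h3 p), ← Finset.mul_sum]
  rw [hLHS, hAbar]
  have hn0 : (n : ℝ) ≠ 0 := by
    have : 0 < n := hn
    exact_mod_cast this.ne'
  have hkeyR : (n : ℝ) ^ 2 * N = t * (n.choose t ^ 2 * t.factorial) := by
    exact_mod_cast hkey
  push_cast
  field_simp
  linear_combination (∑ p, A p) * hkeyR
end

section
/- Let A : Fin n × Fin n → ℝ with n ≥ 2, let Ā = (1/n²) ∑_{(s,τ)} A (s,τ) and Var(A) = (1/n²) ∑_{(s,τ)} (A (s,τ) − Ā)², and fix 2 ≤ t ≤ n. Then the average over all swaps M of length t of W(M)² = (∑_{(i,j) ∈ M} A (i,j))² equals t·[Var(A) + Ā²] + ((t² − t)/(n²(n−1)²))·[(∑_{(s,τ)} A (s,τ))² − ∑_{s} (∑_{τ} A (s,τ))² − ∑_{τ} (∑_{s} A (s,τ))² + ∑_{(s,τ)} A (s,τ)²]. -/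
open Finset

variable {n t : ℕ}

def IsSwapF (M : Finset (Fin n × Fin n)) : Prop :=
  ∀ p ∈ M, ∀ q ∈ M, p ≠ q → p.1 ≠ q.1 ∧ p.2 ≠ q.2

lemma fst_injOn {M : Finset (Fin n × Fin n)} (h : IsSwapF M) :
    Set.InjOn Prod.fst (M : Set (Fin n × Fin n)) := by
  intro p hp q hq hpq
  by_contra hne
  exact (h p hp q hq hne).1 hpq

lemma card_image_fst {M : Finset (Fin n × Fin n)} (h : IsSwapF M) :
    (M.image Prod.fst).card = M.card :=
  Finset.card_image_of_injOn (fst_injOn h)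

lemma existsUnique_fst {M : Finset (Fin n × Fin n)} (h : IsSwapF M) {r : Fin n}
    (hr : r ∈ M.image Prod.fst) : ∃! p, p ∈ M ∧ p.1 = r := by
  obtain ⟨p, hp, hpr⟩ := Finset.mem_image.1 hr
  refine ⟨p, ⟨hp, hpr⟩, ?_⟩
  rintro q ⟨hq, hqr⟩
  by_contra hne
  exact (h q hq p hp hne).1 (hqr.trans hpr.symm)

def mkSwap (R : Finset (Fin n)) (hR : R.card = t) (f : Fin t ↪ Fin n) :
    Finset (Fin n × Fin n) :=
  Finset.univ.image (fun i => (R.orderEmbOfFin hR i, f i))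

lemma mkSwap_inj (R : Finset (Fin n)) (hR : R.card = t) (f : Fin t ↪ Fin n) :
    Function.Injective (fun i : Fin t => (R.orderEmbOfFin hR i, f i)) := by
  intro i j hij
  exact (R.orderEmbOfFin hR).injective (congrArg Prod.fst hij)

lemma mkSwap_card (R : Finset (Fin n)) (hR : R.card = t) (f : Fin t ↪ Fin n) :
    (mkSwap R hR f).card = t := by
  rw [mkSwap, Finset.card_image_of_injective _ (mkSwap_inj R hR f), card_univ, Fintype.card_fin]

lemma mkSwap_isSwap (R : Finset (Fin n)) (hR : R.card = t) (f : Fin t ↪ Fin n) :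
    IsSwapF (mkSwap R hR f) := by
  intro p hp q hq hne
  simp only [mkSwap, Finset.mem_image, Finset.mem_univ, true_and] at hp hq
  obtain ⟨i, rfl⟩ := hp
  obtain ⟨j, rfl⟩ := hq
  have hij : i ≠ j := fun h => hne (by rw [h])
  exact ⟨fun h => hij ((R.orderEmbOfFin hR).injective h), fun h => hij (f.injective h)⟩

lemma mkSwap_image_fst (R : Finset (Fin n)) (hR : R.card = t) (f : Fin t ↪ Fin n) :
    (mkSwap R hR f).image Prod.fst = R := by
  apply Finset.eq_of_subset_of_card_le
  · intro r hr
    simp only [mkSwap, Finset.mem_image] at hr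
    obtain ⟨p, hp, rfl⟩ := hr
    simp only [mkSwap, Finset.mem_image, Finset.mem_univ, true_and] at hp
    obtain ⟨i, rfl⟩ := hp
    exact Finset.orderEmbOfFin_mem R hR i
  · rw [card_image_fst (mkSwap_isSwap R hR f), mkSwap_card, hR]

instance (M : Finset (Fin n × Fin n)) : Decidable (IsSwapF M) := by
  unfold IsSwapF; infer_instance

lemma swap_count : (Finset.univ.filter (fun M : Finset (Fin n × Fin n) =>
    M.card = t ∧ IsSwapF M)).card = n.choose t ^ 2 * t.factorial := by
  classical
  have key : (((Finset.univ.powersetCard t : Finset (Finset (Fin n))) ×ˢ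
      (Finset.univ : Finset (Fin t ↪ Fin n))).card)
      = (Finset.univ.filter (fun M : Finset (Fin n × Fin n) =>
          M.card = t ∧ IsSwapF M)).card := by
    apply Finset.card_bij (fun Rf h =>
      mkSwap Rf.1 ((Finset.mem_powersetCard.1 (Finset.mem_product.1 h).1).2) Rf.2)
    · intro a ha
      simp only [Finset.mem_filter, Finset.mem_univ, true_and]
      exact ⟨mkSwap_card _ _ _, mkSwap_isSwap _ _ _⟩
    · rintro ⟨R, f⟩ h1 ⟨R', f'⟩ h2 heq
      have hR := (Finset.mem_powersetCard.1 (Finset.mem_product.1 h1).1).2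
      have hR' := (Finset.mem_powersetCard.1 (Finset.mem_product.1 h2).1).2
      have hRR : R = R' := by
        rw [← mkSwap_image_fst R hR f, ← mkSwap_image_fst R' hR' f', heq]
      subst hRR
      suffices hf : f = f' by rw [hf]
      ext i
      have : (R.orderEmbOfFin hR i, f i) ∈ mkSwap R hR f' := by
        rw [← heq]; exact Finset.mem_image.2 ⟨i, Finset.mem_univ i, rfl⟩
      simp only [mkSwap, Finset.mem_image, Finset.mem_univ, true_and] at this
      obtain ⟨j, hj⟩ := this
      have hij : j = i := (R.orderEmbOfFin hR).injective (congrArg Prod.fst hj)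
      subst hij
      exact congrArg Fin.val (congrArg Prod.snd hj).symm
    · intro M hM
      simp only [Finset.mem_filter, Finset.mem_univ, true_and] at hM
      obtain ⟨hc, hs⟩ := hM
      set R := M.image Prod.fst with hRdef
      have hR : R.card = t := by rw [hRdef, card_image_fst hs, hc]
      set emb := R.orderEmbOfFin hR with hembdef
      let el : Fin t → Fin n × Fin n := fun i =>
        M.choose (fun p => p.1 = emb i) (existsUnique_fst hs (Finset.orderEmbOfFin_mem R hR i))
      have el_mem : ∀ i, el i ∈ M := fun i => Finset.choose_mem _ _ _
      have el_fst : ∀ i, (el i).1 = emb i := fun i =>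
        Finset.choose_property (fun p => p.1 = emb i) M
          (existsUnique_fst hs (Finset.orderEmbOfFin_mem R hR i))
      have finj : Function.Injective (fun i => (el i).2) := by
        intro i j hij
        have hel : el i = el j := by
          by_contra hne
          exact (hs (el i) (el_mem i) (el j) (el_mem j) hne).2 hij
        apply emb.injective
        rw [← el_fst i, ← el_fst j, hel]
      refine ⟨⟨R, ⟨fun i => (el i).2, finj⟩⟩, ?_, ?_⟩
      · exact Finset.mem_product.2 ⟨Finset.mem_powersetCard.2 ⟨Finset.subset_univ _, hR⟩,
          Finset.mem_univ _⟩
      · apply Finset.eq_of_subset_of_card_le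
        · intro p hp
          simp only [mkSwap, Finset.mem_image, Finset.mem_univ, true_and,
            Function.Embedding.coeFn_mk] at hp
          obtain ⟨i, rfl⟩ := hp
          have : el i = (emb i, (el i).2) := by
            rw [← el_fst i]
          rw [← this]
          exact el_mem i
        · rw [hc, mkSwap_card]
  rw [← key, Finset.card_product, Finset.card_powersetCard]
  simp only [Finset.card_univ, Fintype.card_embedding_eq, Fintype.card_fin,
    Nat.descFactorial_eq_factorial_mul_choose]
  ring

lemma isSwapF_map (σ τ : Equiv.Perm (Fin n)) {M : Finset (Fin n × Fin n)} (h : IsSwapF M) :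
    IsSwapF (M.map (Equiv.prodCongr σ τ).toEmbedding) := by
  intro p hp q hq hne
  rw [Finset.mem_map_equiv] at hp hq
  have hne' : (Equiv.prodCongr σ τ).symm p ≠ (Equiv.prodCongr σ τ).symm q :=
    fun hh => hne ((Equiv.prodCongr σ τ).symm.injective hh)
  obtain ⟨h1, h2⟩ := h _ hp _ hq hne'
  simp only [Equiv.prodCongr_symm, Equiv.prodCongr_apply, Prod.map_fst, Prod.map_snd] at h1 h2
  exact ⟨fun hh => h1 (by rw [hh]), fun hh => h2 (by rw [hh])⟩

/-- The number of swaps of length `t` containing two given points is invariant under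
row and column permutations. -/
lemma pair_count_perm (σ τ : Equiv.Perm (Fin n)) (p q : Fin n × Fin n) :
    ((Finset.univ.filter (fun M : Finset (Fin n × Fin n) => M.card = t ∧ IsSwapF M)).filter
      (fun M => p ∈ M ∧ q ∈ M)).card
    = ((Finset.univ.filter (fun M : Finset (Fin n × Fin n) => M.card = t ∧ IsSwapF M)).filter
      (fun M => (σ p.1, τ p.2) ∈ M ∧ (σ q.1, τ q.2) ∈ M)).card := by
  apply Finset.card_equiv (Equiv.finsetCongr (Equiv.prodCongr σ τ))
  intro M
  simp only [Finset.mem_filter, Finset.mem_univ, true_and, Equiv.finsetCongr_apply]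
  constructor
  · rintro ⟨⟨hc, hs⟩, hp, hq⟩
    refine ⟨⟨by rw [Finset.card_map, hc], isSwapF_map σ τ hs⟩, ?_, ?_⟩
    · rw [Finset.mem_map_equiv]; simpa using hp
    · rw [Finset.mem_map_equiv]; simpa using hq
  · rintro ⟨⟨hc, hs⟩, hp, hq⟩
    rw [Finset.mem_map_equiv] at hp hq
    simp only [Equiv.prodCongr_symm, Equiv.prodCongr_apply, Prod.map_apply,
      Equiv.symm_apply_apply] at hp hq
    refine ⟨⟨by rwa [Finset.card_map] at hc, ?_⟩, hp, hq⟩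
    intro a ha b hb hab
    have := hs _ (Finset.mem_map_of_mem _ ha) _ (Finset.mem_map_of_mem _ hb)
      (fun hh => hab ((Equiv.prodCongr σ τ).injective (by exact hh)))
    simpa using this

lemma exists_perm_two {α : Type*} [DecidableEq α] {a b a' b' : α} (hab : a ≠ b) (hab' : a' ≠ b') :
    ∃ σ : Equiv.Perm α, σ a = a' ∧ σ b = b' := by
  refine ⟨(Equiv.swap (Equiv.swap a a' b) b') * (Equiv.swap a a'), ?_, ?_⟩
  · simp only [Equiv.Perm.mul_apply, Equiv.swap_apply_left]
    apply Equiv.swap_apply_of_ne_of_ne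
    · intro hh
      apply hab
      have := congrArg (Equiv.swap a a') hh
      simpa using this
    · exact hab'
  · simp only [Equiv.Perm.mul_apply, Equiv.swap_apply_left]

-- notation-free abbreviations
def swapSet (n t : ℕ) : Finset (Finset (Fin n × Fin n)) :=
  Finset.univ.filter (fun M : Finset (Fin n × Fin n) => M.card = t ∧ IsSwapF M)

def N2 (n t : ℕ) (p q : Fin n × Fin n) : ℕ :=
  ((swapSet n t).filter (fun M => p ∈ M ∧ q ∈ M)).card

lemma N2_diag_const (p p' : Fin n × Fin n) : N2 n t p p = N2 n t p' p' := by
  have := pair_count_perm (t := t) (Equiv.swap p.1 p'.1) (Equiv.swap p.2 p'.2) p p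
  simpa [N2, swapSet, Equiv.swap_apply_left] using this

lemma N2_compat_const {p q p' q' : Fin n × Fin n} (h1 : p.1 ≠ q.1) (h2 : p.2 ≠ q.2)
    (h1' : p'.1 ≠ q'.1) (h2' : p'.2 ≠ q'.2) : N2 n t p q = N2 n t p' q' := by
  obtain ⟨σ, hσ1, hσ2⟩ := exists_perm_two h1 h1'
  obtain ⟨τ, hτ1, hτ2⟩ := exists_perm_two h2 h2'
  have := pair_count_perm (t := t) σ τ p q
  rw [hσ1, hσ2, hτ1, hτ2] at this
  simpa [N2, swapSet] using this

lemma N2_zero {p q : Fin n × Fin n} (hne : p ≠ q) (h : p.1 = q.1 ∨ p.2 = q.2) :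
    N2 n t p q = 0 := by
  rw [N2, Finset.card_eq_zero, Finset.filter_eq_empty_iff]
  rintro M hM ⟨hp, hq⟩
  simp only [swapSet, Finset.mem_filter, Finset.mem_univ, true_and] at hM
  obtain ⟨h1, h2⟩ := hM.2 p hp q hq hne
  rcases h with h | h
  · exact h1 h
  · exact h2 h

lemma sum_N2_diag : ∑ p : Fin n × Fin n, N2 n t p p = t * (swapSet n t).card := by
  have h1 : ∀ p : Fin n × Fin n, N2 n t p p
      = ∑ M ∈ swapSet n t, (if p ∈ M then 1 else 0) := by
    intro p
    rw [N2]
    rw [Finset.card_filter]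
    exact Finset.sum_congr rfl (fun M _ => by simp)
  simp only [h1]
  rw [Finset.sum_comm]
  rw [Finset.sum_congr rfl (fun M hM => ?_), Finset.sum_const, smul_eq_mul, mul_comm]
  have : ∑ p : Fin n × Fin n, (if p ∈ M then 1 else 0) = M.card := by
    rw [← Finset.card_filter]
    congr 1
    simp [Finset.filter_mem_eq_inter]
  rw [this]
  simp only [swapSet, Finset.mem_filter] at hM
  exact hM.2.1

lemma sum_N2_offdiag :
    ∑ z ∈ (Finset.univ : Finset ((Fin n × Fin n) × (Fin n × Fin n))).filter
        (fun z => z.1.1 ≠ z.2.1 ∧ z.1.2 ≠ z.2.2), N2 n t z.1 z.2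
      = (t * t - t) * (swapSet n t).card := by
  have h1 : ∀ z : (Fin n × Fin n) × (Fin n × Fin n), N2 n t z.1 z.2
      = ∑ M ∈ swapSet n t, (if z.1 ∈ M ∧ z.2 ∈ M then 1 else 0) := by
    intro z
    rw [N2, Finset.card_filter]
  simp only [h1]
  rw [Finset.sum_comm]
  rw [Finset.sum_congr rfl (fun M hM => ?_), Finset.sum_const, smul_eq_mul, mul_comm]
  simp only [swapSet, Finset.mem_filter, Finset.mem_univ, true_and] at hM
  obtain ⟨hc, hs⟩ := hM
  have key : (Finset.univ.filter (fun z : (Fin n × Fin n) × (Fin n × Fin n) =>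
      z.1.1 ≠ z.2.1 ∧ z.1.2 ≠ z.2.2)).filter (fun z => z.1 ∈ M ∧ z.2 ∈ M) = M.offDiag := by
    ext z
    simp only [Finset.mem_filter, Finset.mem_univ, true_and, Finset.mem_offDiag]
    constructor
    · rintro ⟨⟨h1, _⟩, hz1, hz2⟩
      exact ⟨hz1, hz2, fun hh => h1 (by rw [hh])⟩
    · rintro ⟨hz1, hz2, hne⟩
      exact ⟨hs _ hz1 _ hz2 hne, hz1, hz2⟩
  rw [← Finset.card_filter, key, Finset.offDiag_card, hc]

lemma D_card : ((Finset.univ : Finset ((Fin n × Fin n) × (Fin n × Fin n))).filter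
    (fun z => z.1.1 ≠ z.2.1 ∧ z.1.2 ≠ z.2.2)).card = (n * n - n) ^ 2 := by
  have := Finset.card_equiv (Equiv.prodProdProdComm (Fin n) (Fin n) (Fin n) (Fin n))
    (s := (Finset.univ : Finset ((Fin n × Fin n) × (Fin n × Fin n))).filter
      (fun z => z.1.1 ≠ z.2.1 ∧ z.1.2 ≠ z.2.2))
    (t := (Finset.univ : Finset (Fin n)).offDiag ×ˢ (Finset.univ : Finset (Fin n)).offDiag)
    (by
      rintro ⟨⟨a, b⟩, c, d⟩
      simp [Finset.mem_offDiag, Equiv.prodProdProdComm, and_assoc])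
  rw [this, Finset.card_product, Finset.offDiag_card, Finset.card_univ, Fintype.card_fin]
  ring

lemma main_sum (A : Fin n × Fin n → ℝ) (c1 c2 : ℕ)
    (hc1 : ∀ p : Fin n × Fin n, N2 n t p p = c1)
    (hc2 : ∀ p q : Fin n × Fin n, p.1 ≠ q.1 → p.2 ≠ q.2 → N2 n t p q = c2) :
    ∑ M ∈ swapSet n t, (∑ p ∈ M, A p) ^ 2
      = (c1 : ℝ) * ∑ p, A p ^ 2
        + (c2 : ℝ) * ∑ z ∈ (Finset.univ : Finset ((Fin n × Fin n) × (Fin n × Fin n))).filter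
            (fun z => z.1.1 ≠ z.2.1 ∧ z.1.2 ≠ z.2.2), A z.1 * A z.2 := by
  have step1 : ∀ M ∈ swapSet n t, (∑ p ∈ M, A p) ^ 2
      = ∑ z : (Fin n × Fin n) × (Fin n × Fin n),
          (if z ∈ M ×ˢ M then A z.1 * A z.2 else 0) := by
    intro M _
    rw [sq, Finset.sum_mul_sum, ← Finset.sum_product', Finset.sum_ite_mem, Finset.univ_inter]
  rw [Finset.sum_congr rfl step1, Finset.sum_comm]
  have step2 : ∀ z : (Fin n × Fin n) × (Fin n × Fin n),
      (∑ M ∈ swapSet n t, if z ∈ M ×ˢ M then A z.1 * A z.2 else 0)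
        = (N2 n t z.1 z.2 : ℝ) * (A z.1 * A z.2) := by
    intro z
    simp only [Finset.mem_product]
    rw [← Finset.sum_filter, Finset.sum_const, ← N2, nsmul_eq_mul]
  rw [Finset.sum_congr rfl (fun z _ => step2 z)]
  have step3 : ∀ z : (Fin n × Fin n) × (Fin n × Fin n),
      (N2 n t z.1 z.2 : ℝ) * (A z.1 * A z.2)
        = (c1 : ℝ) * (if z.1 = z.2 then A z.1 * A z.2 else 0)
          + (c2 : ℝ) * (if z.1.1 ≠ z.2.1 ∧ z.1.2 ≠ z.2.2 then A z.1 * A z.2 else 0) := by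
    intro z
    by_cases hd : z.1 = z.2
    · have hcompat : ¬(z.1.1 ≠ z.2.1 ∧ z.1.2 ≠ z.2.2) := by
        rw [hd]; simp
      rw [if_pos hd, if_neg hcompat, hd, hc1]
      ring
    · by_cases hcompat : z.1.1 ≠ z.2.1 ∧ z.1.2 ≠ z.2.2
      · rw [if_neg hd, if_pos hcompat, hc2 _ _ hcompat.1 hcompat.2]
        ring
      · rw [if_neg hd, if_neg hcompat, N2_zero hd ?_]
        · ring
        · rcases not_and_or.1 hcompat with h | h
          · exact Or.inl (not_not.1 h)
          · exact Or.inr (not_not.1 h)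
  rw [Finset.sum_congr rfl (fun z _ => step3 z), Finset.sum_add_distrib,
    ← Finset.mul_sum, ← Finset.mul_sum, Finset.sum_filter]
  congr 1
  congr 1
  rw [Fintype.sum_prod_type]
  congr 1
  ext p
  rw [Finset.sum_ite_eq]
  simp [sq]

lemma sum_row_eq (A : Fin n × Fin n → ℝ) :
    ∑ z : (Fin n × Fin n) × (Fin n × Fin n), (if z.1.1 = z.2.1 then A z.1 * A z.2 else 0)
      = ∑ s, (∑ τ, A (s, τ)) ^ 2 := by
  rw [Fintype.sum_prod_type]
  have h1 : ∀ p : Fin n × Fin n,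
      (∑ q : Fin n × Fin n, if p.1 = q.1 then A p * A q else 0)
        = A p * ∑ τ, A (p.1, τ) := by
    intro p
    rw [Fintype.sum_prod_type, Finset.sum_comm]
    simp [Finset.sum_ite_eq, Finset.mul_sum]
  rw [Finset.sum_congr rfl (fun p _ => h1 p), Fintype.sum_prod_type]
  refine Finset.sum_congr rfl fun s _ => ?_
  simp [sq, Finset.sum_mul]

lemma sum_col_eq (A : Fin n × Fin n → ℝ) :
    ∑ z : (Fin n × Fin n) × (Fin n × Fin n), (if z.1.2 = z.2.2 then A z.1 * A z.2 else 0)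
      = ∑ τ, (∑ s, A (s, τ)) ^ 2 := by
  rw [Fintype.sum_prod_type]
  have h1 : ∀ p : Fin n × Fin n,
      (∑ q : Fin n × Fin n, if p.2 = q.2 then A p * A q else 0)
        = A p * ∑ s, A (s, p.2) := by
    intro p
    rw [Fintype.sum_prod_type]
    simp [Finset.sum_ite_eq, Finset.mul_sum]
  rw [Finset.sum_congr rfl (fun p _ => h1 p), Fintype.sum_prod_type, Finset.sum_comm]
  refine Finset.sum_congr rfl fun τ _ => ?_
  simp [sq, Finset.sum_mul]

lemma sum_diag_eq (A : Fin n × Fin n → ℝ) :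
    ∑ z : (Fin n × Fin n) × (Fin n × Fin n),
        (if z.1.1 = z.2.1 ∧ z.1.2 = z.2.2 then A z.1 * A z.2 else 0)
      = ∑ p, A p ^ 2 := by
  rw [Fintype.sum_prod_type]
  refine Finset.sum_congr rfl fun p _ => ?_
  have : ∀ q : Fin n × Fin n, (p.1 = q.1 ∧ p.2 = q.2) ↔ p = q := by
    intro q; rw [Prod.ext_iff]
  simp only [this]
  rw [Finset.sum_ite_eq]
  simp [sq]

lemma sum_all_eq (A : Fin n × Fin n → ℝ) :
    ∑ z : (Fin n × Fin n) × (Fin n × Fin n), A z.1 * A z.2 = (∑ p, A p) ^ 2 := by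
  rw [Fintype.sum_prod_type, sq, Finset.sum_mul_sum]

lemma QD_eq (A : Fin n × Fin n → ℝ) :
    ∑ z ∈ (Finset.univ : Finset ((Fin n × Fin n) × (Fin n × Fin n))).filter
        (fun z => z.1.1 ≠ z.2.1 ∧ z.1.2 ≠ z.2.2), A z.1 * A z.2
      = (∑ p, A p) ^ 2 - (∑ s, (∑ τ, A (s, τ)) ^ 2) - (∑ τ, (∑ s, A (s, τ)) ^ 2)
          + ∑ p, A p ^ 2 := by
  rw [Finset.sum_filter]
  have key : ∀ z : (Fin n × Fin n) × (Fin n × Fin n),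
      (if z.1.1 ≠ z.2.1 ∧ z.1.2 ≠ z.2.2 then A z.1 * A z.2 else 0)
        = A z.1 * A z.2 - (if z.1.1 = z.2.1 then A z.1 * A z.2 else 0)
          - (if z.1.2 = z.2.2 then A z.1 * A z.2 else 0)
          + (if z.1.1 = z.2.1 ∧ z.1.2 = z.2.2 then A z.1 * A z.2 else 0) := by
    intro z
    by_cases h1 : z.1.1 = z.2.1 <;> by_cases h2 : z.1.2 = z.2.2 <;>
      simp [h1, h2]
  rw [Finset.sum_congr rfl (fun z _ => key z)]
  rw [Finset.sum_add_distrib, Finset.sum_sub_distrib, Finset.sum_sub_distrib,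
    sum_all_eq, sum_row_eq, sum_col_eq, sum_diag_eq]

/-- The second moment of `W(M) = ∑_{(i,j) ∈ M} A (i,j)` over swaps of length `t`:
the average over all swaps `M` of length `t` of `W(M)²` equals
`t·[Var(A) + Ā²] + ((t² − t)/(n²(n−1)²))·[(∑ A)² − ∑_s(∑_τ A)² − ∑_τ(∑_s A)² + ∑ A²]`. -/
theorem swap_sum_sq_mean (n t : ℕ) (hn : 2 ≤ n) (ht1 : 2 ≤ t) (ht2 : t ≤ n)
    (A : Fin n × Fin n → ℝ)
    (Abar VarA : ℝ) (hAbar : Abar = (1 / (n : ℝ) ^ 2) * ∑ p, A p)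
    (hVarA : VarA = (1 / (n : ℝ) ^ 2) * ∑ p, (A p - Abar) ^ 2) :
    (∑ M ∈ Finset.univ.filter (fun M : Finset (Fin n × Fin n) =>
        M.card = t ∧ ∀ p ∈ M, ∀ q ∈ M, p ≠ q → p.1 ≠ q.1 ∧ p.2 ≠ q.2),
      (∑ p ∈ M, A p) ^ 2) / (n.choose t ^ 2 * t.factorial : ℕ)
      = (t : ℝ) * (VarA + Abar ^ 2)
        + (((t : ℝ) ^ 2 - t) / ((n : ℝ) ^ 2 * ((n : ℝ) - 1) ^ 2)) *
          ((∑ p, A p) ^ 2 - (∑ s, (∑ τ, A (s, τ)) ^ 2) - (∑ τ, (∑ s, A (s, τ)) ^ 2)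
            + ∑ p, A p ^ 2) := by
  classical
  have hset : Finset.univ.filter (fun M : Finset (Fin n × Fin n) =>
      M.card = t ∧ ∀ p ∈ M, ∀ q ∈ M, p ≠ q → p.1 ≠ q.1 ∧ p.2 ≠ q.2) = swapSet n t := by
    unfold swapSet IsSwapF
    apply Finset.filter_congr
    intro M _
    rfl
  rw [hset]
  set N := (swapSet n t).card with hNdef
  have hN : N = n.choose t ^ 2 * t.factorial := swap_count
  have hNpos : 0 < N := by
    rw [hN]
    exact Nat.mul_pos (pow_pos (Nat.choose_pos ht2) 2) t.factorial_pos
  -- reference points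
  have h0n : (0 : ℕ) < n := by omega
  have h1n : (1 : ℕ) < n := by omega
  set a0 : Fin n := ⟨0, h0n⟩
  set a1 : Fin n := ⟨1, h1n⟩
  have ha : a0 ≠ a1 := by simp [a0, a1, Fin.ext_iff]
  set p0 : Fin n × Fin n := (a0, a0)
  set q0 : Fin n × Fin n := (a1, a1)
  set c1 : ℕ := N2 n t p0 p0 with hc1def
  set c2 : ℕ := N2 n t p0 q0 with hc2def
  have hc1 : ∀ p : Fin n × Fin n, N2 n t p p = c1 := fun p => N2_diag_const p p0
  have hc2 : ∀ p q : Fin n × Fin n, p.1 ≠ q.1 → p.2 ≠ q.2 → N2 n t p q = c2 :=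
    fun p q h1 h2 => N2_compat_const h1 h2 ha ha
  -- natural number double counting identities
  have e1 : n * n * c1 = t * N := by
    have := sum_N2_diag (n := n) (t := t)
    rw [Finset.sum_congr rfl (fun p _ => hc1 p), Finset.sum_const, Finset.card_univ,
      smul_eq_mul, Fintype.card_prod, Fintype.card_fin] at this
    exact this
  have e2 : (n * n - n) ^ 2 * c2 = (t * t - t) * N := by
    have := sum_N2_offdiag (n := n) (t := t)
    rw [Finset.sum_congr rfl (fun z hz => hc2 z.1 z.2
        (Finset.mem_filter.1 hz).2.1 (Finset.mem_filter.1 hz).2.2),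
      Finset.sum_const, smul_eq_mul, D_card] at this
    exact this
  -- real versions
  have nn : (n : ℝ) ≠ 0 := Nat.cast_ne_zero.2 (by omega)
  have hn2 : (2 : ℝ) ≤ (n : ℝ) := by exact_mod_cast hn
  have nn1 : (n : ℝ) - 1 ≠ 0 := by intro h; linarith
  have nN : (N : ℝ) ≠ 0 := Nat.cast_ne_zero.2 hNpos.ne'
  have r1 : (n : ℝ) ^ 2 * c1 = (t : ℝ) * N := by
    have := congrArg (Nat.cast : ℕ → ℝ) e1
    push_cast at this
    linarith [this]
  have r2 : (n : ℝ) ^ 2 * ((n : ℝ) - 1) ^ 2 * c2 = ((t : ℝ) ^ 2 - t) * N := by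
    have := congrArg (Nat.cast : ℕ → ℝ) e2
    have hnt : n ≤ n * n := Nat.le_mul_of_pos_left n h0n
    have htt : t ≤ t * t := Nat.le_mul_of_pos_left t (by omega)
    push_cast [Nat.cast_sub hnt, Nat.cast_sub htt] at this
    calc (n : ℝ) ^ 2 * ((n : ℝ) - 1) ^ 2 * c2 = ((n : ℝ) * n - n) ^ 2 * c2 := by ring
      _ = ((t : ℝ) * t - t) * N := this
      _ = ((t : ℝ) ^ 2 - t) * N := by ring
  have hc1R : (c1 : ℝ) = (t : ℝ) * N / (n : ℝ) ^ 2 := by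
    rw [eq_div_iff (pow_ne_zero 2 nn)]
    linarith [r1]
  have hc2R : (c2 : ℝ) = ((t : ℝ) ^ 2 - t) * N / ((n : ℝ) ^ 2 * ((n : ℝ) - 1) ^ 2) := by
    rw [eq_div_iff (mul_ne_zero (pow_ne_zero 2 nn) (pow_ne_zero 2 nn1))]
    linarith [r2]
  -- variance identity
  have hsum : ∑ p, A p = (n : ℝ) ^ 2 * Abar := by
    rw [hAbar]
    field_simp
  have hvar : VarA + Abar ^ 2 = (1 / (n : ℝ) ^ 2) * ∑ p, A p ^ 2 := by
    have expand : ∑ p, (A p - Abar) ^ 2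
        = ∑ p, A p ^ 2 - 2 * Abar * (∑ p, A p) + (n : ℝ) ^ 2 * Abar ^ 2 := by
      have hpt : ∀ p : Fin n × Fin n, (A p - Abar) ^ 2
          = A p ^ 2 - 2 * Abar * A p + Abar ^ 2 := fun p => by ring
      rw [Finset.sum_congr rfl (fun p _ => hpt p), Finset.sum_add_distrib,
        Finset.sum_sub_distrib, ← Finset.mul_sum, Finset.sum_const, Finset.card_univ,
        Fintype.card_prod, Fintype.card_fin, nsmul_eq_mul]
      push_cast
      ring
    rw [hVarA, expand, hsum]
    field_simp
    ring
  -- main computation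
  rw [main_sum A c1 c2 hc1 hc2, QD_eq A, hvar,
    show ((n.choose t ^ 2 * t.factorial : ℕ) : ℝ) = (N : ℝ) by rw [hN],
    hc1R, hc2R]
  field_simp
end

section
/- Let A : Fin n × Fin n → ℝ with n ≥ 2, let Ā = (1/n²) ∑_{(s,τ)} A (s,τ) and Var(A) = (1/n²) ∑_{(s,τ)} (A (s,τ) − Ā)², and fix 2 ≤ t ≤ n. Then the variance over all swaps M of length t of W(M) = ∑_{(i,j) ∈ M} A (i,j), namely the average of W(M)² minus the square of the average of W(M), equals t·[Var(A) + Ā²] + ((t² − t)/(n²(n−1)²))·[(∑_{(s,τ)} A (s,τ))² − ∑_{s} (∑_{τ} A (s,τ))² − ∑_{τ} (∑_{s} A (s,τ))² + ∑_{(s,τ)} A (s,τ)²] − (t·Ā)². -/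
set_option maxHeartbeats 1000000
open Finset



def swapsF (n t : ℕ) : Finset (Finset (Fin n × Fin n)) :=
  Finset.univ.filter (fun M => M.card = t ∧ ∀ p ∈ M, ∀ q ∈ M, p ≠ q → p.1 ≠ q.1 ∧ p.2 ≠ q.2)

def embP {m : ℕ} (p : Fin (m+1) × Fin (m+1)) : (Fin m × Fin m) ↪ (Fin (m+1) × Fin (m+1)) :=
  (p.1.succAboveEmb).prodMap (p.2.succAboveEmb)

lemma embP_apply {m : ℕ} (p : Fin (m+1) × Fin (m+1)) (z : Fin m × Fin m) :
    embP p z = (p.1.succAbove z.1, p.2.succAbove z.2) := rfl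

lemma embP_ne {m : ℕ} (p : Fin (m+1) × Fin (m+1)) (z : Fin m × Fin m) : embP p z ≠ p := by
  intro h
  exact Fin.succAbove_ne p.1 z.1 (congrArg Prod.fst h)

lemma step_count (m t : ℕ) (p : Fin (m+1) × Fin (m+1))
    (P : Finset (Fin (m+1) × Fin (m+1)) → Prop) [DecidablePred P] :
    ((swapsF (m+1) (t+1)).filter (fun M => p ∈ M ∧ P M)).card
      = ((swapsF m t).filter (fun M => P (insert p (M.map (embP p))))).card := by
  symm
  apply Finset.card_bij (fun M _ => insert p (M.map (embP p)))
  · -- membership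
    rintro M hM
    simp only [swapsF, mem_filter, mem_univ, true_and] at hM ⊢
    obtain ⟨⟨hcard, hswap⟩, hP⟩ := hM
    have hpnot : p ∉ M.map (embP p) := by
      simp only [mem_map]
      rintro ⟨z, _, hz⟩
      exact embP_ne p z hz
    refine ⟨⟨by rw [card_insert_of_notMem hpnot, card_map, hcard], ?_⟩, by simp [hP], by simp [hP]⟩
    intro a ha b hb hab
    rcases mem_insert.1 ha with rfl | ha
    · rcases mem_insert.1 hb with rfl | hb
      · exact absurd rfl hab
      · obtain ⟨z, _, rfl⟩ := mem_map.1 hb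
        exact ⟨(Fin.succAbove_ne a.1 z.1).symm, (Fin.succAbove_ne a.2 z.2).symm⟩
    · obtain ⟨z, hz, rfl⟩ := mem_map.1 ha
      rcases mem_insert.1 hb with rfl | hb
      · exact ⟨Fin.succAbove_ne b.1 z.1, Fin.succAbove_ne b.2 z.2⟩
      · obtain ⟨w, hw, rfl⟩ := mem_map.1 hb
        have hzw : z ≠ w := fun h => hab (by rw [h])
        obtain ⟨h1, h2⟩ := hswap z hz w hw hzw
        exact ⟨fun h => h1 (Fin.succAbove_right_injective h),
               fun h => h2 (Fin.succAbove_right_injective h)⟩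
  · -- injective
    intro M1 h1 M2 h2 heq
    have key : ∀ M : Finset (Fin m × Fin m), (insert p (M.map (embP p))).erase p = M.map (embP p) := by
      intro M
      apply Finset.erase_insert
      simp only [mem_map]
      rintro ⟨z, _, hz⟩
      exact embP_ne p z hz
    have := congrArg (fun s => Finset.erase s p) heq
    simp only [key] at this
    exact Finset.map_injective _ this
  · -- surjective
    intro M hM
    simp only [swapsF, mem_filter, mem_univ, true_and] at hM
    obtain ⟨⟨hcard, hswap⟩, hpM, hP⟩ := hM
    have hsub : M.erase p ⊆ Finset.univ.map (embP p) := by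
      intro q hq
      have hqp : q ≠ p := ne_of_mem_erase hq
      have hqM : q ∈ M := mem_of_mem_erase hq
      obtain ⟨h1, h2⟩ := hswap q hqM p hpM hqp
      obtain ⟨z1, hz1⟩ := Fin.exists_succAbove_eq h1
      obtain ⟨z2, hz2⟩ := Fin.exists_succAbove_eq h2
      simp only [mem_map, mem_univ, true_and]
      exact ⟨(z1, z2), by rw [embP_apply, hz1, hz2]⟩
    obtain ⟨u, -, hu⟩ := Finset.subset_map_iff.1 hsub
    have hMu : M = insert p (u.map (embP p)) := by
      rw [← hu, Finset.insert_erase hpM]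
    refine ⟨u, ?_, hMu.symm⟩
    simp only [swapsF, mem_filter, mem_univ, true_and]
    refine ⟨⟨?_, ?_⟩, by rw [← hMu]; exact hP⟩
    · have : (u.map (embP p)).card = M.card - 1 := by rw [← hu, card_erase_of_mem hpM]
      rw [card_map] at this
      omega
    · intro a ha b hb hab
      have haM : embP p a ∈ M := by rw [hMu]; exact mem_insert_of_mem (mem_map_of_mem _ ha)
      have hbM : embP p b ∈ M := by rw [hMu]; exact mem_insert_of_mem (mem_map_of_mem _ hb)
      have hne : embP p a ≠ embP p b := fun h => hab ((embP p).injective h)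
      obtain ⟨h1, h2⟩ := hswap _ haM _ hbM hne
      constructor
      · intro h; exact h1 (by simp [embP_apply, h])
      · intro h; exact h2 (by simp [embP_apply, h])


lemma swapsF_def (n t : ℕ) : swapsF n t =
  Finset.univ.filter (fun M => M.card = t ∧ ∀ p ∈ M, ∀ q ∈ M, p ≠ q → p.1 ≠ q.1 ∧ p.2 ≠ q.2) := rfl


lemma count_one (m t : ℕ) (p : Fin (m+1) × Fin (m+1)) :
    ((swapsF (m+1) (t+1)).filter (fun M => p ∈ M)).card = (swapsF m t).card := by
  have h := step_count m t p (fun _ => True)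
  simpa using h

lemma count_two (m t : ℕ) (p q : Fin (m+2) × Fin (m+2)) (h1 : p.1 ≠ q.1) (h2 : p.2 ≠ q.2) :
    ((swapsF (m+2) (t+2)).filter (fun M => p ∈ M ∧ q ∈ M)).card = (swapsF m t).card := by
  obtain ⟨z1, hz1⟩ := Fin.exists_succAbove_eq h1.symm
  obtain ⟨z2, hz2⟩ := Fin.exists_succAbove_eq h2.symm
  have hq : embP p (z1, z2) = q := by rw [embP_apply]; simp [hz1, hz2]
  have key := step_count (m+1) (t+1) p (fun M => q ∈ M)
  rw [key]
  have : ∀ M' : Finset (Fin (m+1) × Fin (m+1)),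
      (q ∈ insert p (M'.map (embP p))) ↔ (z1, z2) ∈ M' := by
    intro M'
    rw [mem_insert, ← hq, mem_map']
    constructor
    · rintro (h | h)
      · exact absurd (congrArg Prod.fst h.symm) (by rw [hq]; exact h1)
      · exact h
    · exact Or.inr
  rw [filter_congr (fun M' _ => by rw [this M'])]
  exact count_one m t (z1, z2)

lemma swapsF_card : ∀ t n, (swapsF n t).card = n.choose t ^ 2 * t.factorial := by
  intro t
  induction t with
  | zero =>
    intro n
    have : swapsF n 0 = {∅} := by
      rw [swapsF_def]
      ext M
      simp only [mem_filter, mem_univ, true_and, mem_singleton, card_eq_zero]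
      constructor
      · rintro ⟨rfl, -⟩; rfl
      · rintro rfl; simp
    simp [this]
  | succ t ih =>
    intro n
    match n with
    | 0 =>
      have : swapsF 0 (t+1) = ∅ := by
        rw [swapsF_def]
        ext M
        simp only [mem_filter, mem_univ, true_and, notMem_empty, iff_false, not_and]
        intro h
        have h0 : M.card ≤ Fintype.card (Fin 0 × Fin 0) := Finset.card_le_univ M
        rw [h] at h0
        simp [Fintype.card_prod] at h0
      simp [this]
    | m+1 =>
      have key : (t+1) * (swapsF (m+1) (t+1)).card = (m+1)^2 * (swapsF m t).card := by
        have h1 : ∑ M ∈ swapsF (m+1) (t+1), M.card = (t+1) * (swapsF (m+1) (t+1)).card :=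
          calc ∑ M ∈ swapsF (m+1) (t+1), M.card = ∑ _M ∈ swapsF (m+1) (t+1), (t+1) :=
                Finset.sum_congr rfl (fun M hM => by
                  rw [swapsF_def] at hM
                  exact (mem_filter.1 hM).2.1)
            _ = (t+1) * (swapsF (m+1) (t+1)).card := by rw [sum_const, smul_eq_mul, mul_comm]
        have h2 : ∑ M ∈ swapsF (m+1) (t+1), M.card
            = ∑ p : Fin (m+1) × Fin (m+1), ((swapsF (m+1) (t+1)).filter (fun M => p ∈ M)).card := by
          simp_rw [Finset.card_filter]
          rw [Finset.sum_comm]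
          congr 1
          ext M
          rw [Finset.card_eq_sum_ones M, Finset.sum_ite_mem]
          simp [Finset.univ_inter]
        rw [← h1, h2]
        simp_rw [count_one]
        rw [sum_const, smul_eq_mul, Finset.card_univ]
        simp [sq, Fintype.card_prod]
      have hrec : (t+1) * ((m+1).choose (t+1) ^ 2 * (t+1).factorial)
          = (m+1)^2 * (m.choose t ^ 2 * t.factorial) := by
        have h := Nat.add_one_mul_choose_eq m t
        have : (m+1) * m.choose t = (m+1).choose (t+1) * (t+1) := h
        calc (t+1) * ((m+1).choose (t+1) ^ 2 * (t+1).factorial)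
            = ((m+1).choose (t+1) * (t+1)) * ((m+1).choose (t+1) * (t+1)) * t.factorial := by
              rw [Nat.factorial_succ]; ring
          _ = ((m+1) * m.choose t) * ((m+1) * m.choose t) * t.factorial := by rw [this]
          _ = (m+1)^2 * (m.choose t ^ 2 * t.factorial) := by ring
      rw [ih] at key
      exact Nat.eq_of_mul_eq_mul_left (Nat.succ_pos t) (key.trans hrec.symm)


-- Lemma A : linear sum
theorem sumA (n t : ℕ) (f : Fin n × Fin n → ℝ) :
    ∑ M ∈ swapsF n t, ∑ p ∈ M, f p
      = ∑ p : Fin n × Fin n, (((swapsF n t).filter (fun M => p ∈ M)).card : ℝ) * f p := by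
  have h : ∀ M : Finset (Fin n × Fin n), ∑ p ∈ M, f p
      = ∑ p : Fin n × Fin n, if p ∈ M then f p else 0 := fun M => by
    rw [Finset.sum_ite_mem, Finset.univ_inter]
  simp_rw [h]
  rw [Finset.sum_comm]
  refine Finset.sum_congr rfl fun p _ => ?_
  rw [← Finset.sum_filter, Finset.sum_const, nsmul_eq_mul]

-- Lemma B : quadratic sum
theorem sumB (n t : ℕ) (f : Fin n × Fin n → ℝ) :
    ∑ M ∈ swapsF n t, (∑ p ∈ M, f p) ^ 2
      = ∑ p : Fin n × Fin n, ∑ q : Fin n × Fin n,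
          (((swapsF n t).filter (fun M => p ∈ M ∧ q ∈ M)).card : ℝ) * (f p * f q) := by
  have h : ∀ M : Finset (Fin n × Fin n), (∑ p ∈ M, f p) ^ 2
      = ∑ p : Fin n × Fin n, ∑ q : Fin n × Fin n,
          if p ∈ M ∧ q ∈ M then f p * f q else 0 := fun M => by
    have hi : ∀ (g : Fin n × Fin n → ℝ), ∑ p ∈ M, g p
        = ∑ p : Fin n × Fin n, if p ∈ M then g p else 0 := fun g => by
      rw [Finset.sum_ite_mem, Finset.univ_inter]
    rw [sq, hi, Finset.sum_mul_sum]
    refine Finset.sum_congr rfl fun p _ => Finset.sum_congr rfl fun q _ => ?_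
    by_cases h1 : p ∈ M <;> by_cases h2 : q ∈ M <;> simp [h1, h2]
  simp_rw [h]
  rw [Finset.sum_comm]
  refine Finset.sum_congr rfl fun p _ => ?_
  rw [Finset.sum_comm]
  refine Finset.sum_congr rfl fun q _ => ?_
  rw [← Finset.sum_filter, Finset.sum_const, nsmul_eq_mul]

-- inclusion-exclusion identity
theorem sumIE (n : ℕ) (f : Fin n × Fin n → ℝ) :
    ∑ p : Fin n × Fin n, ∑ q : Fin n × Fin n,
        (if p.1 ≠ q.1 ∧ p.2 ≠ q.2 then f p * f q else 0)
      = (∑ p, f p) ^ 2 - (∑ s, (∑ τ, f (s, τ)) ^ 2) - (∑ τ, (∑ s, f (s, τ)) ^ 2)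
        + ∑ p, f p ^ 2 := by
  have key : ∀ p q : Fin n × Fin n,
      (if p.1 ≠ q.1 ∧ p.2 ≠ q.2 then f p * f q else 0)
      = f p * f q - (if p.1 = q.1 then f p * f q else 0)
        - (if p.2 = q.2 then f p * f q else 0) + (if p = q then f p * f q else 0) := by
    intro p q
    by_cases h1 : p.1 = q.1 <;> by_cases h2 : p.2 = q.2
    · have hpq : p = q := Prod.ext h1 h2
      simp [h1, h2, hpq]
    · have hpq : p ≠ q := fun h => h2 (by rw [h])
      simp [h1, h2, hpq]
    · have hpq : p ≠ q := fun h => h1 (by rw [h])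
      simp [h1, h2, hpq]
    · have hpq : p ≠ q := fun h => h1 (by rw [h])
      simp [h1, h2, hpq]
  simp_rw [key, Finset.sum_add_distrib, Finset.sum_sub_distrib]
  have e1 : ∑ p : Fin n × Fin n, ∑ q : Fin n × Fin n, f p * f q = (∑ p, f p) ^ 2 := by
    rw [sq, Finset.sum_mul_sum]
  have e2 : ∑ p : Fin n × Fin n, ∑ q : Fin n × Fin n, (if p.1 = q.1 then f p * f q else 0)
      = ∑ s, (∑ τ, f (s, τ)) ^ 2 := by
    have inner : ∀ p : Fin n × Fin n,
        ∑ q : Fin n × Fin n, (if p.1 = q.1 then f p * f q else 0)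
        = f p * ∑ τ, f (p.1, τ) := by
      intro p
      rw [Fintype.sum_prod_type]
      have : ∀ s : Fin n, ∑ τ : Fin n, (if p.1 = s then f p * f (s, τ) else 0)
          = if p.1 = s then ∑ τ : Fin n, f p * f (s, τ) else 0 := fun s => by
        split_ifs <;> simp
      simp_rw [this]
      rw [Finset.sum_ite_eq]
      simp [Finset.mul_sum]
    simp_rw [inner]
    rw [Fintype.sum_prod_type]
    refine Finset.sum_congr rfl fun s _ => ?_
    dsimp only
    rw [sq, ← Finset.sum_mul]
  have e3 : ∑ p : Fin n × Fin n, ∑ q : Fin n × Fin n, (if p.2 = q.2 then f p * f q else 0)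
      = ∑ τ, (∑ s, f (s, τ)) ^ 2 := by
    have inner : ∀ p : Fin n × Fin n,
        ∑ q : Fin n × Fin n, (if p.2 = q.2 then f p * f q else 0)
        = f p * ∑ s, f (s, p.2) := by
      intro p
      rw [Fintype.sum_prod_type]
      have swap : ∀ s : Fin n, ∀ τ : Fin n,
          (if p.2 = τ then f p * f (s, τ) else 0) = (if p.2 = τ then f p * f (s, τ) else 0) :=
        fun _ _ => rfl
      rw [Finset.sum_comm]
      have : ∀ τ : Fin n, ∑ s : Fin n, (if p.2 = τ then f p * f (s, τ) else 0)
          = if p.2 = τ then ∑ s : Fin n, f p * f (s, τ) else 0 := fun τ => by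
        split_ifs <;> simp
      simp_rw [this]
      rw [Finset.sum_ite_eq]
      simp [Finset.mul_sum]
    simp_rw [inner]
    rw [Fintype.sum_prod_type, Finset.sum_comm]
    refine Finset.sum_congr rfl fun τ _ => ?_
    dsimp only
    rw [sq, ← Finset.sum_mul]
  have e4 : ∑ p : Fin n × Fin n, ∑ q : Fin n × Fin n, (if p = q then f p * f q else 0)
      = ∑ p, f p ^ 2 := by
    refine Finset.sum_congr rfl fun p _ => ?_
    rw [Finset.sum_ite_eq]
    simp [sq]
  rw [e1, e2, e3, e4]


lemma natI1 (m s : ℕ) : (m+1).choose (s+1) ^ 2 * (s+1).factorial * (m+2)^2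
    = (s+2) * ((m+2).choose (s+2) ^ 2 * (s+2).factorial) := by
  have h : (m+2) * (m+1).choose (s+1) = (m+2).choose (s+2) * (s+2) :=
    Nat.add_one_mul_choose_eq (m+1) (s+1)
  calc (m+1).choose (s+1) ^ 2 * (s+1).factorial * (m+2)^2
      = ((m+2) * (m+1).choose (s+1))^2 * (s+1).factorial := by ring
    _ = ((m+2).choose (s+2) * (s+2))^2 * (s+1).factorial := by rw [h]
    _ = (s+2) * ((m+2).choose (s+2) ^ 2 * (s+2).factorial) := by
        rw [Nat.factorial_succ (s+1)]; ring

lemma natI2 (m s : ℕ) : m.choose s ^ 2 * s.factorial * ((m+2)^2 * (m+1)^2)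
    = ((s+2) * (s+1)) * ((m+2).choose (s+2) ^ 2 * (s+2).factorial) := by
  have h1 : (m+1) * m.choose s = (m+1).choose (s+1) * (s+1) := Nat.add_one_mul_choose_eq m s
  have h2 : (m+2) * (m+1).choose (s+1) = (m+2).choose (s+2) * (s+2) :=
    Nat.add_one_mul_choose_eq (m+1) (s+1)
  calc m.choose s ^ 2 * s.factorial * ((m+2)^2 * (m+1)^2)
      = ((m+1) * m.choose s)^2 * (m+2)^2 * s.factorial := by ring
    _ = ((m+1).choose (s+1) * (s+1))^2 * (m+2)^2 * s.factorial := by rw [h1]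
    _ = ((m+2) * (m+1).choose (s+1))^2 * (s+1)^2 * s.factorial := by ring
    _ = ((m+2).choose (s+2) * (s+2))^2 * (s+1)^2 * s.factorial := by rw [h2]
    _ = ((s+2) * (s+1)) * ((m+2).choose (s+2) ^ 2 * (s+2).factorial) := by
        rw [Nat.factorial_succ (s+1), Nat.factorial_succ s]; ring

/-- Proposition B3: the variance over all swaps `M` of length `t` of
`W(M) = ∑_{(i,j) ∈ M} A (i,j)` — the average of `W(M)²` minus the square of the
average of `W(M)` — equals
`t·[Var(A) + Ā²] + ((t² − t)/(n²(n−1)²))·[(∑ A)² − ∑_s(∑_τ A)² − ∑_τ(∑_s A)² + ∑ A²] − (t·Ā)²`. -/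
theorem swap_sum_variance (n t : ℕ) (hn : 2 ≤ n) (ht1 : 2 ≤ t) (ht2 : t ≤ n)
    (A : Fin n × Fin n → ℝ)
    (Abar VarA : ℝ) (hAbar : Abar = (1 / (n : ℝ) ^ 2) * ∑ p, A p)
    (hVarA : VarA = (1 / (n : ℝ) ^ 2) * ∑ p, (A p - Abar) ^ 2) :
    (∑ M ∈ Finset.univ.filter (fun M : Finset (Fin n × Fin n) =>
          M.card = t ∧ ∀ p ∈ M, ∀ q ∈ M, p ≠ q → p.1 ≠ q.1 ∧ p.2 ≠ q.2),
        (∑ p ∈ M, A p) ^ 2) / (n.choose t ^ 2 * t.factorial : ℕ)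
      - ((∑ M ∈ Finset.univ.filter (fun M : Finset (Fin n × Fin n) =>
          M.card = t ∧ ∀ p ∈ M, ∀ q ∈ M, p ≠ q → p.1 ≠ q.1 ∧ p.2 ≠ q.2),
        ∑ p ∈ M, A p) / (n.choose t ^ 2 * t.factorial : ℕ)) ^ 2
      = (t : ℝ) * (VarA + Abar ^ 2)
        + (((t : ℝ) ^ 2 - t) / ((n : ℝ) ^ 2 * ((n : ℝ) - 1) ^ 2)) *
          ((∑ p, A p) ^ 2 - (∑ s, (∑ τ, A (s, τ)) ^ 2) - (∑ τ, (∑ s, A (s, τ)) ^ 2)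
            + ∑ p, A p ^ 2)
        - ((t : ℝ) * Abar) ^ 2 := by
  obtain ⟨m, rfl⟩ : ∃ m, n = m + 2 := ⟨n - 2, by omega⟩
  obtain ⟨s, rfl⟩ : ∃ s, t = s + 2 := ⟨t - 2, by omega⟩
  have hfil : Finset.univ.filter (fun M : Finset (Fin (m+2) × Fin (m+2)) =>
      M.card = s + 2 ∧ ∀ p ∈ M, ∀ q ∈ M, p ≠ q → p.1 ≠ q.1 ∧ p.2 ≠ q.2) = swapsF (m+2) (s+2) := rfl
  rw [hfil]
  set N : ℕ := (m+2).choose (s+2) ^ 2 * (s+2).factorial with hN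
  set c1 : ℕ := (m+1).choose (s+1) ^ 2 * (s+1).factorial with hc1
  set c2 : ℕ := m.choose s ^ 2 * s.factorial with hc2
  set T : ℝ := ∑ p, A p with hT
  set a : ℝ := ∑ p, A p ^ 2 with ha
  set B : ℝ := T ^ 2 - (∑ s', (∑ τ, A (s', τ)) ^ 2) - (∑ τ, (∑ s', A (s', τ)) ^ 2) + a with hB
  -- counts
  have cnt1 : ∀ p : Fin (m+2) × Fin (m+2),
      ((swapsF (m+2) (s+2)).filter (fun M => p ∈ M)).card = c1 := by
    intro p
    rw [count_one (m+1) (s+1) p, swapsF_card]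
  have cnt2 : ∀ p q : Fin (m+2) × Fin (m+2),
      ((((swapsF (m+2) (s+2)).filter (fun M => p ∈ M ∧ q ∈ M)).card : ℝ)) * (A p * A q)
      = (c1 : ℝ) * (if p = q then A p * A q else 0)
        + (c2 : ℝ) * (if p.1 ≠ q.1 ∧ p.2 ≠ q.2 then A p * A q else 0) := by
    intro p q
    by_cases hco : p.1 ≠ q.1 ∧ p.2 ≠ q.2
    · have hpq : p ≠ q := fun h => hco.1 (by rw [h])
      rw [count_two m s p q hco.1 hco.2, swapsF_card, ← hc2]
      rw [if_neg hpq, if_pos hco]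
      ring
    · rw [if_neg hco]
      by_cases hpq : p = q
      · subst hpq
        rw [if_pos rfl]
        have : (swapsF (m+2) (s+2)).filter (fun M => p ∈ M ∧ p ∈ M)
            = (swapsF (m+2) (s+2)).filter (fun M => p ∈ M) := by
          apply Finset.filter_congr; intro M _; simp
        rw [this, cnt1 p]
        simp
      · have hempty : (swapsF (m+2) (s+2)).filter (fun M => p ∈ M ∧ q ∈ M) = ∅ := by
          rw [Finset.filter_eq_empty_iff]
          rintro M hM ⟨hp, hq⟩
          rw [swapsF, mem_filter] at hM
          exact hco (hM.2.2 p hp q hq hpq)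
        rw [hempty, if_neg hpq]
        simp
  -- the two sums
  have hsum1 : ∑ M ∈ swapsF (m+2) (s+2), ∑ p ∈ M, A p = (c1 : ℝ) * T := by
    rw [sumA]
    simp_rw [cnt1]
    rw [← Finset.mul_sum]
  have hsum2 : ∑ M ∈ swapsF (m+2) (s+2), (∑ p ∈ M, A p) ^ 2 = (c1 : ℝ) * a + (c2 : ℝ) * B := by
    rw [sumB]
    simp_rw [cnt2, Finset.sum_add_distrib, ← Finset.mul_sum]
    congr 1
    · congr 1
      rw [ha]
      refine Finset.sum_congr rfl fun p _ => ?_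
      rw [Finset.sum_ite_eq]
      simp [sq]
    · congr 1
      rw [hB, sumIE]
  rw [hsum1, hsum2]
  -- numerics
  have hNpos : 0 < N := by
    apply Nat.mul_pos
    · exact pow_pos (Nat.choose_pos (by omega)) 2
    · exact Nat.factorial_pos _
  have hNne : (N : ℝ) ≠ 0 := Nat.cast_ne_zero.2 hNpos.ne'
  have hmne : ((m : ℝ) + 2) ≠ 0 := by positivity
  have hm1ne : ((m : ℝ) + 1) ≠ 0 := by positivity
  have hc1R : (c1 : ℝ) * ((m : ℝ) + 2) ^ 2 = ((s : ℝ) + 2) * N := by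
    have h := natI1 m s
    rw [hc1, hN]
    exact_mod_cast h
  have hc2R : (c2 : ℝ) * (((m : ℝ) + 2) ^ 2 * ((m : ℝ) + 1) ^ 2)
      = (((s : ℝ) + 2) * ((s : ℝ) + 1)) * N := by
    have h := natI2 m s
    rw [hc2, hN]
    exact_mod_cast h
  -- Abar, VarA facts
  have hcard : ((Fintype.card (Fin (m+2) × Fin (m+2)) : ℕ) : ℝ) = ((m : ℝ) + 2) ^ 2 := by
    simp [Fintype.card_prod]
    push_cast
    ring
  have hAbar' : Abar = T / ((m : ℝ) + 2) ^ 2 := by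
    rw [hAbar]; push_cast; ring
  have hVar : VarA + Abar ^ 2 = a / ((m : ℝ) + 2) ^ 2 := by
    rw [hVarA]
    have expand : ∑ p, (A p - Abar) ^ 2 = a - 2 * Abar * T + ((m : ℝ) + 2) ^ 2 * Abar ^ 2 := by
      have : ∀ p : Fin (m+2) × Fin (m+2), (A p - Abar) ^ 2
          = A p ^ 2 - 2 * Abar * A p + Abar ^ 2 := fun p => by ring
      simp_rw [this, Finset.sum_add_distrib, Finset.sum_sub_distrib, ← Finset.mul_sum,
        Finset.sum_const, card_univ, nsmul_eq_mul, hcard]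
      rfl
    rw [expand, hAbar']
    push_cast
    field_simp
    ring
  rw [hVar, hAbar']
  push_cast
  have hn1 : ((m : ℝ) + 2) - 1 = (m : ℝ) + 1 := by ring
  rw [hn1]
  -- final algebra
  have hc1N : (c1 : ℝ) = ((s:ℝ)+2) * N / ((m:ℝ)+2)^2 := by
    rw [eq_div_iff (by positivity)]
    exact hc1R
  have hc2N : (c2 : ℝ) = ((s:ℝ)+2) * ((s:ℝ)+1) * N / (((m:ℝ)+2)^2 * ((m:ℝ)+1)^2) := by
    rw [eq_div_iff (by positivity)]
    linarith [hc2R]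
  rw [hc1N, hc2N]
  field_simp
  ring
end

section
/- For 1 ≤ t ≤ n and any fixed position (i, j) ∈ Fin n × Fin n, the number of swaps of length t between two sets of size n that contain (i, j) equals C(n−1, t−1)² · (t−1)!. In particular, this count does not depend on the choice of (i, j). -/
/-- The number of swaps of length `t` between two sets of size `n` containing a
fixed position `(i, j)` equals `C(n−1, t−1)² · (t−1)!` (independently of the
choice of `(i, j)`). -/
theorem count_swaps_through_position (n t : ℕ) (ht1 : 1 ≤ t) (ht2 : t ≤ n)
    (i j : Fin n) :
    Nat.card {M : Finset (Fin n × Fin n) //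
        M.card = t ∧ (∀ p ∈ M, ∀ q ∈ M, p ≠ q → p.1 ≠ q.1 ∧ p.2 ≠ q.2)
          ∧ (i, j) ∈ M}
      = (n - 1).choose (t - 1) ^ 2 * (t - 1).factorial := by
  classical
  set k := t - 1 with hk
  have htk : t = k + 1 := (Nat.succ_pred_eq_of_pos ht1).symm
  let S := Σ s : {s : Finset (Fin n) // s.card = k ∧ i ∉ s},
      ({x // x ∈ s.1} ↪ {y : Fin n // y ≠ j})
  -- basic facts about the image finset
  have hmemB : ∀ (s : Finset (Fin n)) (hsi : i ∉ s)
      (f : {x // x ∈ s} ↪ {y : Fin n // y ≠ j}),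
      ∀ p ∈ s.attach.image (fun x => (x.1, (f x).1)), p.1 ∈ s ∧ p.2 ≠ j := by
    intro s hsi f p hp
    simp only [Finset.mem_image, Finset.mem_attach, true_and] at hp
    obtain ⟨x, rfl⟩ := hp
    exact ⟨x.2, (f x).2⟩
  have hni : ∀ (s : Finset (Fin n)) (hsi : i ∉ s)
      (f : {x // x ∈ s} ↪ {y : Fin n // y ≠ j}),
      (i, j) ∉ s.attach.image (fun x => (x.1, (f x).1)) := fun s hsi f h =>
    hsi (hmemB s hsi f _ h).1
  have hcard : ∀ (s : Finset (Fin n)) (f : {x // x ∈ s} ↪ {y : Fin n // y ≠ j}),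
      (s.attach.image (fun x => (x.1, (f x).1))).card = s.card := by
    intro s f
    rw [Finset.card_image_of_injective, Finset.card_attach]
    intro x y hxy
    exact Subtype.ext (congrArg Prod.fst hxy)
  have himg : ∀ (s : Finset (Fin n)) (f : {x // x ∈ s} ↪ {y : Fin n // y ≠ j}),
      (s.attach.image (fun x => (x.1, (f x).1))).image Prod.fst = s := by
    intro s f
    rw [Finset.image_image]
    ext x
    simp
  let F : S → {M : Finset (Fin n × Fin n) //
      M.card = t ∧ (∀ p ∈ M, ∀ q ∈ M, p ≠ q → p.1 ≠ q.1 ∧ p.2 ≠ q.2)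
        ∧ (i, j) ∈ M} := fun a => ⟨insert (i, j)
      (a.1.1.attach.image (fun x => (x.1, (a.2 x).1))), by
    obtain ⟨⟨s, hsc, hsi⟩, f⟩ := a
    refine ⟨?_, ?_, Finset.mem_insert_self _ _⟩
    · rw [Finset.card_insert_of_notMem (hni s hsi f), hcard, hsc, htk]
    · intro p hp q hq hpq
      simp only [Finset.mem_insert] at hp hq
      rcases hp with rfl | hp <;> rcases hq with rfl | hq
      · exact absurd rfl hpq
      · have h := hmemB s hsi f q hq
        exact ⟨fun h' => hsi (show (i, j).1 ∈ s from h' ▸ h.1), fun h' => h.2 h'.symm⟩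
      · have h := hmemB s hsi f p hp
        exact ⟨fun h' => hsi (show (i, j).1 ∈ s from h' ▸ h.1), h.2⟩
      · simp only [Finset.mem_image, Finset.mem_attach, true_and] at hp hq
        obtain ⟨x, rfl⟩ := hp
        obtain ⟨y, rfl⟩ := hq
        have hxy : x ≠ y := fun h => hpq (by rw [h])
        exact ⟨fun h => hxy (Subtype.ext h), fun h => hxy (f.injective (Subtype.ext h))⟩⟩
  have hFbij : Function.Bijective F := by
    constructor
    · rintro ⟨s₁, f₁⟩ ⟨s₂, f₂⟩ hF
      have hF' : insert (i, j) (s₁.1.attach.image (fun x => (x.1, (f₁ x).1))) =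
          insert (i, j) (s₂.1.attach.image (fun x => (x.1, (f₂ x).1))) :=
        Subtype.ext_iff.mp hF
      have hBeq : s₁.1.attach.image (fun x => (x.1, (f₁ x).1)) =
          s₂.1.attach.image (fun x => (x.1, (f₂ x).1)) := by
        rw [← Finset.erase_insert (hni s₁.1 s₁.2.2 f₁),
          ← Finset.erase_insert (hni s₂.1 s₂.2.2 f₂), hF']
      have hs : s₁ = s₂ := by
        apply Subtype.ext
        rw [← himg s₁.1 f₁, ← himg s₂.1 f₂, hBeq]
      subst hs
      have hf : f₁ = f₂ := by
        apply DFunLike.ext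
        intro x
        have hx : ((x : Fin n), (f₁ x).1) ∈ s₁.1.attach.image
            (fun y => (y.1, (f₂ y).1)) := by
          rw [← hBeq]
          exact Finset.mem_image_of_mem _ (Finset.mem_attach _ _)
        simp only [Finset.mem_image, Finset.mem_attach, true_and] at hx
        obtain ⟨y, hy⟩ := hx
        have hyx : y = x := Subtype.ext (congrArg Prod.fst hy)
        have h2 : (f₂ y).1 = (f₁ x).1 := congrArg Prod.snd hy
        subst hyx
        exact Subtype.ext h2.symm
      rw [hf]
    · rintro ⟨M, hMc, hMp, hMij⟩
      set B := M.erase (i, j) with hB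
      have hBM : ∀ p ∈ B, p ∈ M ∧ p ≠ (i, j) := fun p hp =>
        ⟨Finset.mem_of_mem_erase hp, Finset.ne_of_mem_erase hp⟩
      have hfinj : Set.InjOn Prod.fst (B : Set (Fin n × Fin n)) := by
        intro p hp q hq h
        simp only [Finset.coe_mem, Finset.mem_coe] at hp hq
        by_contra hne
        exact ((hMp p (hBM p hp).1 q (hBM q hq).1 hne).1) h
      set s := B.image Prod.fst with hsdef
      have hsi : i ∉ s := by
        intro h
        simp only [hsdef, Finset.mem_image] at h
        obtain ⟨p, hp, hp1⟩ := h
        obtain ⟨hpM, hpne⟩ := hBM p hp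
        exact (hMp p hpM (i, j) hMij hpne).1 hp1
      have hsc : s.card = k := by
        rw [hsdef, Finset.card_image_of_injOn hfinj, hB,
          Finset.card_erase_of_mem hMij, hMc]
      have hchoose : ∀ x : {x // x ∈ s}, ∃ p, p ∈ B ∧ p.1 = (x : Fin n) := by
        intro x
        have hx := x.2
        simp only [hsdef, Finset.mem_image] at hx
        obtain ⟨p, hp, hp1⟩ := hx
        exact ⟨p, hp, hp1⟩
      choose g hgB hg1 using hchoose
      have hg2 : ∀ x, (g x).2 ≠ j := by
        intro x h
        obtain ⟨hgM, hgne⟩ := hBM _ (hgB x)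
        exact (hMp _ hgM (i, j) hMij hgne).2 h
      let f : {x // x ∈ s} ↪ {y : Fin n // y ≠ j} :=
        ⟨fun x => ⟨(g x).2, hg2 x⟩, by
          intro x y hxy
          have h2 : (g x).2 = (g y).2 := congrArg Subtype.val hxy
          have hgg : g x = g y := by
            by_contra hne
            exact (hMp _ (hBM _ (hgB x)).1 _ (hBM _ (hgB y)).1 hne).2 h2
          exact Subtype.ext (by rw [← hg1 x, ← hg1 y, hgg])⟩
      refine ⟨⟨⟨s, hsc, hsi⟩, f⟩, ?_⟩
      apply Subtype.ext
      show insert (i, j) (s.attach.image (fun x => (x.1, (f x).1))) = M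
      have himg2 : s.attach.image (fun x => (x.1, (f x).1)) = B := by
        apply Finset.eq_of_subset_of_card_le
        · intro p hp
          simp only [Finset.mem_image, Finset.mem_attach, true_and] at hp
          obtain ⟨x, rfl⟩ := hp
          have hfx : ((x : Fin n), (f x).1) = g x := by
            rw [Prod.ext_iff]
            exact ⟨(hg1 x).symm, rfl⟩
          rw [hfx]
          exact hgB x
        · rw [hcard, hsc, hB, Finset.card_erase_of_mem hMij, hMc]
      rw [himg2, hB, Finset.insert_erase hMij]
  rw [← Nat.card_eq_of_bijective F hFbij]
  have hS : Nat.card S = (n - 1).choose k * ((n - 1).descFactorial k) := by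
    rw [Nat.card_eq_fintype_card, Fintype.card_sigma]
    have hcardne : Fintype.card {y : Fin n // y ≠ j} = n - 1 := by
      simp [Fintype.card_subtype_compl]
    have hfib : ∀ s : {s : Finset (Fin n) // s.card = k ∧ i ∉ s},
        Fintype.card ({x // x ∈ s.1} ↪ {y : Fin n // y ≠ j})
          = (n - 1).descFactorial k := by
      intro s
      rw [Fintype.card_embedding_eq, hcardne, Fintype.card_coe, s.2.1]
    rw [Finset.sum_congr rfl (fun s _ => hfib s), Finset.sum_const, smul_eq_mul,
      Finset.card_univ]
    congr 1
    have hcnt : Fintype.card {s : Finset (Fin n) // s.card = k ∧ i ∉ s}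
        = ((Finset.univ.erase i).powersetCard k).card := by
      rw [Fintype.card_subtype]
      apply Finset.card_bij (fun s _ => s)
      · intro s hs
        simp only [Finset.mem_filter, Finset.mem_univ, true_and] at hs
        rw [Finset.mem_powersetCard]
        exact ⟨fun x hx => Finset.mem_erase.mpr ⟨fun h => hs.2 (h ▸ hx), Finset.mem_univ x⟩, hs.1⟩
      · intro a _ b _ h
        exact h
      · intro s hs
        rw [Finset.mem_powersetCard] at hs
        refine ⟨s, ?_, rfl⟩
        simp only [Finset.mem_filter, Finset.mem_univ, true_and]
        exact ⟨hs.2, fun h => (Finset.mem_erase.mp (hs.1 h)).1 rfl⟩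
    rw [hcnt, Finset.card_powersetCard, Finset.card_erase_of_mem (Finset.mem_univ i),
      Finset.card_univ, Fintype.card_fin]
  rw [hS, Nat.descFactorial_eq_factorial_mul_choose, hk]
  ring
end

section
/- Let n ≥ 2 and 2 ≤ t ≤ n, and let (i, j), (i', j') ∈ Fin n × Fin n be two positions with i ≠ i' and j ≠ j'. Then the number of swaps of length t between two sets of size n that contain both (i, j) and (i', j') equals C(n−2, t−2)² · (t−2)!. In particular, this count does not depend on the choice of the two compatible positions. -/
theorem count_swaps {α β : Type*} [Fintype α] [Fintype β] [DecidableEq α] [DecidableEq β] (s : ℕ) :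
    Nat.card {M : Finset (α × β) // M.card = s ∧ ∀ p ∈ M, ∀ q ∈ M, p ≠ q → p.1 ≠ q.1 ∧ p.2 ≠ q.2}
      = (Fintype.card α).choose s * (Fintype.card β).descFactorial s := by
  classical
  set T := {M : Finset (α × β) // M.card = s ∧ ∀ p ∈ M, ∀ q ∈ M, p ≠ q → p.1 ≠ q.1 ∧ p.2 ≠ q.2}
  let build : ∀ (S : Finset α), ({x // x ∈ S} ↪ β) → Finset (α × β) :=
    fun S e => S.attach.image (fun x => (x.1, e x))
  have hmem : ∀ (S : Finset α) (e : {x // x ∈ S} ↪ β) (p : α × β),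
      p ∈ build S e ↔ ∃ h : p.1 ∈ S, e ⟨p.1, h⟩ = p.2 := by
    intro S e p
    simp only [build, Finset.mem_image, Finset.mem_attach, true_and]
    constructor
    · rintro ⟨x, hx⟩
      refine ⟨by rw [← hx]; exact x.2, ?_⟩
      obtain ⟨p1, p2⟩ := p
      obtain ⟨h1, h2⟩ := Prod.mk.injEq .. ▸ hx
      subst h1; simpa using h2
    · rintro ⟨h, he⟩
      exact ⟨⟨p.1, h⟩, by simp [he]⟩
  have hinj : ∀ (S : Finset α) (e : {x // x ∈ S} ↪ β),
      Function.Injective (fun x : {x // x ∈ S} => (x.1, e x)) := by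
    intro S e x y hxy
    exact Subtype.ext (congrArg Prod.fst hxy)
  let F : (Σ S : {S : Finset α // S.card = s}, ({x // x ∈ S.1} ↪ β)) → T := fun ⟨S, e⟩ =>
    ⟨build S.1 e, by
      rw [Finset.card_image_of_injective _ (hinj S.1 e), Finset.card_attach]; exact S.2, by
      intro p hp q hq hpq
      rw [hmem] at hp hq
      obtain ⟨hp1, hp2⟩ := hp
      obtain ⟨hq1, hq2⟩ := hq
      constructor
      · intro h
        apply hpq
        have : (⟨p.1, hp1⟩ : {x // x ∈ S.1}) = ⟨q.1, hq1⟩ := Subtype.ext h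
        exact Prod.ext h (by rw [← hp2, ← hq2, this])
      · intro h
        apply hpq
        have : (⟨p.1, hp1⟩ : {x // x ∈ S.1}) = ⟨q.1, hq1⟩ := e.injective (by rw [hp2, hq2, h])
        exact Prod.ext (congrArg Subtype.val this) (by rw [← hp2, ← hq2, this])⟩
  have hFbij : Function.Bijective F := by
    constructor
    · rintro ⟨⟨S, hS⟩, e⟩ ⟨⟨S', hS'⟩, e'⟩ h
      have hMM : build S e = build S' e' := congrArg Subtype.val h
      have hSS : S = S' := by
        ext a
        constructor
        · intro ha
          have : (a, e ⟨a, ha⟩) ∈ build S' e' := by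
            rw [← hMM, hmem]; exact ⟨ha, rfl⟩
          rw [hmem] at this; exact this.1
        · intro ha
          have : (a, e' ⟨a, ha⟩) ∈ build S e := by
            rw [hMM, hmem]; exact ⟨ha, rfl⟩
          rw [hmem] at this; exact this.1
      subst hSS
      have : e = e' := by
        ext x
        have : (x.1, e x) ∈ build S e' := by
          rw [← hMM, hmem]; exact ⟨x.2, rfl⟩
        rw [hmem] at this
        obtain ⟨h1, h2⟩ := this
        exact h2.symm.trans (congrArg e' (Subtype.ext rfl))
      subst this
      rfl
    · rintro ⟨M, hcard, hdist⟩
      have huniq : ∀ a ∈ M.image Prod.fst, ∃! p, p ∈ M ∧ p.1 = a := by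
        intro a ha
        rw [Finset.mem_image] at ha
        obtain ⟨p, hp, hpa⟩ := ha
        refine ⟨p, ⟨hp, hpa⟩, ?_⟩
        rintro q ⟨hq, hqa⟩
        by_contra hne
        exact (hdist q hq p hp hne).1 (hqa.trans hpa.symm)
      set S : Finset α := M.image Prod.fst with hSdef
      have hScard : S.card = s := by
        rw [hSdef, Finset.card_image_of_injOn, hcard]
        intro p hp q hq hpq
        by_contra hne
        exact (hdist p hp q hq hne).1 hpq
      let e : {x // x ∈ S} → β := fun x => (M.choose _ (huniq x.1 x.2)).2
      have he : ∀ x : {x // x ∈ S}, (x.1, e x) ∈ M := by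
        intro x
        have h1 := M.choose_mem _ (huniq x.1 x.2)
        have h2 := M.choose_property _ (huniq x.1 x.2)
        have : M.choose _ (huniq x.1 x.2) = (x.1, e x) := Prod.ext h2 rfl
        rwa [this] at h1
      have einj : Function.Injective e := by
        intro x y hxy
        have hx := he x
        have hy := he y
        by_contra hne
        have hne' : (x.1, e x) ≠ (y.1, e y) := by
          intro hc
          exact hne (Subtype.ext (congrArg Prod.fst hc))
        exact (hdist _ hx _ hy hne').2 hxy
      refine ⟨⟨⟨S, hScard⟩, ⟨e, einj⟩⟩, ?_⟩
      apply Subtype.ext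
      show build S ⟨e, einj⟩ = M
      ext p
      rw [hmem]
      constructor
      · rintro ⟨h, hep⟩
        have := he ⟨p.1, h⟩
        rw [show ((⟨p.1, h⟩ : {x // x ∈ S}).1, e ⟨p.1, h⟩) = p from Prod.ext rfl hep] at this
        exact this
      · intro hp
        have h1 : p.1 ∈ S := Finset.mem_image_of_mem Prod.fst hp
        refine ⟨h1, ?_⟩
        have h3 := (huniq p.1 h1).unique ⟨he ⟨p.1, h1⟩, rfl⟩ ⟨hp, rfl⟩
        simpa using congrArg Prod.snd h3
  rw [← Nat.card_eq_of_bijective F hFbij, Nat.card_eq_fintype_card, Fintype.card_sigma]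
  have : ∀ S : {S : Finset α // S.card = s},
      Fintype.card ({x // x ∈ S.1} ↪ β) = (Fintype.card β).descFactorial s := by
    intro S
    rw [Fintype.card_embedding_eq, Fintype.card_coe, S.2]
  simp only [this, Finset.sum_const, Finset.card_univ, Fintype.card_finset_len, smul_eq_mul]

/-- For `n ≥ 2`, `2 ≤ t ≤ n`, and two compatible positions `(i, j)`, `(i', j')`
(i.e. `i ≠ i'` and `j ≠ j'`), the number of swaps of length `t` between two sets
of size `n` containing both positions equals `C(n−2, t−2)² · (t−2)!`
(independently of the choice of the two compatible positions). -/
theorem count_swaps_through_two_positions (n t : ℕ) (hn : 2 ≤ n)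
    (ht1 : 2 ≤ t) (ht2 : t ≤ n)
    (i j i' j' : Fin n) (hi : i ≠ i') (hj : j ≠ j') :
    Nat.card {M : Finset (Fin n × Fin n) //
        M.card = t ∧ (∀ p ∈ M, ∀ q ∈ M, p ≠ q → p.1 ≠ q.1 ∧ p.2 ≠ q.2)
          ∧ (i, j) ∈ M ∧ (i', j') ∈ M}
      = (n - 2).choose (t - 2) ^ 2 * (t - 2).factorial := by
  classical
  set α' := {x : Fin n // x ≠ i ∧ x ≠ i'} with hα'
  set β' := {y : Fin n // y ≠ j ∧ y ≠ j'} with hβ'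
  have hcard' : ∀ (a b : Fin n), a ≠ b → Fintype.card {x : Fin n // x ≠ a ∧ x ≠ b} = n - 2 := by
    intro a b hab
    rw [Fintype.card_subtype]
    have : (Finset.univ.filter fun x : Fin n => x ≠ a ∧ x ≠ b) = Finset.univ \ {a, b} := by
      ext x; simp [not_or]
    rw [this, Finset.card_sdiff_of_subset (by simp), Finset.card_univ, Fintype.card_fin,
      Finset.card_insert_of_notMem (by simpa using hab), Finset.card_singleton]
  set P : Fin n × Fin n := (i, j) with hP
  set Q : Fin n × Fin n := (i', j') with hQ
  have hPQ : P ≠ Q := by simp [hP, hQ, Prod.ext_iff, hi]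
  let emb : α' × β' ↪ Fin n × Fin n :=
    ⟨fun r => (r.1.1, r.2.1), by
      rintro ⟨a, b⟩ ⟨c, d⟩ h
      obtain ⟨h1, h2⟩ := Prod.mk.injEq .. ▸ h
      exact Prod.ext (Subtype.ext h1) (Subtype.ext h2)⟩
  set T' := {N : Finset (α' × β') //
      N.card = t - 2 ∧ ∀ p ∈ N, ∀ q ∈ N, p ≠ q → p.1 ≠ q.1 ∧ p.2 ≠ q.2} with hT'
  have hmapco : ∀ (N : Finset (α' × β')) (p : Fin n × Fin n), p ∈ N.map emb →
      p.1 ≠ i ∧ p.1 ≠ i' ∧ p.2 ≠ j ∧ p.2 ≠ j' := by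
    intro N p hp
    rw [Finset.mem_map] at hp
    obtain ⟨r, _, rfl⟩ := hp
    exact ⟨r.1.2.1, r.1.2.2, r.2.2.1, r.2.2.2⟩
  have hdisj : ∀ N : Finset (α' × β'), Disjoint (N.map emb) ({P, Q} : Finset (Fin n × Fin n)) := by
    intro N
    rw [Finset.disjoint_right]
    intro p hp hpc
    have := hmapco N p hpc
    rcases Finset.mem_insert.1 hp with h | h
    · exact this.1 (by rw [h])
    · exact this.2.1 (by rw [Finset.mem_singleton.1 h])
  let G : T' → {M : Finset (Fin n × Fin n) //
        M.card = t ∧ (∀ p ∈ M, ∀ q ∈ M, p ≠ q → p.1 ≠ q.1 ∧ p.2 ≠ q.2)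
          ∧ (i, j) ∈ M ∧ (i', j') ∈ M} := fun N =>
    ⟨N.1.map emb ∪ {P, Q}, by
      rw [Finset.card_union_of_disjoint (hdisj N.1), Finset.card_map, N.2.1,
        Finset.card_insert_of_notMem (by simpa using hPQ), Finset.card_singleton]
      omega, by
      intro p hp q hq hpq
      rw [Finset.mem_union] at hp hq
      rcases hp with hp | hp <;> rcases hq with hq | hq
      · rw [Finset.mem_map] at hp hq
        obtain ⟨r, hr, rfl⟩ := hp
        obtain ⟨r', hr', rfl⟩ := hq
        have hrr : r ≠ r' := fun h => hpq (by rw [h])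
        have := N.2.2 r hr r' hr' hrr
        exact ⟨fun h => this.1 (Subtype.ext h), fun h => this.2 (Subtype.ext h)⟩
      · have h1 := hmapco N.1 p hp
        rcases Finset.mem_insert.1 hq with h | h
        · rw [h]; exact ⟨h1.1, h1.2.2.1⟩
        · rw [Finset.mem_singleton.1 h]; exact ⟨h1.2.1, h1.2.2.2⟩
      · have h1 := hmapco N.1 q hq
        rcases Finset.mem_insert.1 hp with h | h
        · rw [h]; exact ⟨(Ne.symm h1.1 : P.1 ≠ q.1), Ne.symm h1.2.2.1⟩
        · rw [Finset.mem_singleton.1 h]; exact ⟨Ne.symm h1.2.1, Ne.symm h1.2.2.2⟩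
      · have hp' : p = P ∨ p = Q := by simpa using hp
        have hq' : q = P ∨ q = Q := by simpa using hq
        rcases hp' with rfl | rfl <;> rcases hq' with rfl | rfl
        · exact absurd rfl hpq
        · exact ⟨hi, hj⟩
        · exact ⟨hi.symm, hj.symm⟩
        · exact absurd rfl hpq, by
      constructor <;> · rw [Finset.mem_union]; right; simp [hP, hQ]⟩
  have hGbij : Function.Bijective G := by
    constructor
    · intro N N' h
      have hMM : N.1.map emb ∪ {P, Q} = N'.1.map emb ∪ {P, Q} := congrArg Subtype.val h
      have : N.1.map emb = N'.1.map emb := by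
        have e1 : ∀ K : Finset (α' × β'), (K.map emb ∪ {P, Q}) \ ({P, Q} : Finset (Fin n × Fin n)) = K.map emb := by
          intro K
          rw [Finset.union_sdiff_right, Finset.sdiff_eq_self_of_disjoint (hdisj K)]
        rw [← e1 N.1, ← e1 N'.1, hMM]
      exact Subtype.ext (Finset.map_injective emb this)
    · rintro ⟨M, hcard, hdist, hPM, hQM⟩
      have hprops : ∀ r ∈ M \ ({P, Q} : Finset (Fin n × Fin n)),
          r.1 ≠ i ∧ r.1 ≠ i' ∧ r.2 ≠ j ∧ r.2 ≠ j' := by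
        intro r hr
        rw [Finset.mem_sdiff] at hr
        obtain ⟨hrM, hrPQ⟩ := hr
        have hrP : r ≠ P := fun h => hrPQ (by simp [h])
        have hrQ : r ≠ Q := fun h => hrPQ (by simp [h])
        have h1 := hdist r hrM P hPM hrP
        have h2 := hdist r hrM Q hQM hrQ
        exact ⟨h1.1, h2.1, h1.2, h2.2⟩
      let f : {r // r ∈ M \ ({P, Q} : Finset (Fin n × Fin n))} → α' × β' := fun r =>
        (⟨r.1.1, (hprops r.1 r.2).1, (hprops r.1 r.2).2.1⟩,
         ⟨r.1.2, (hprops r.1 r.2).2.2.1, (hprops r.1 r.2).2.2.2⟩)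
      set N : Finset (α' × β') := (M \ ({P, Q} : Finset (Fin n × Fin n))).attach.image f with hN
      have hNmap : N.map emb = M \ ({P, Q} : Finset (Fin n × Fin n)) := by
        ext p
        rw [Finset.mem_map]
        constructor
        · rintro ⟨q, hq, rfl⟩
          rw [hN, Finset.mem_image] at hq
          obtain ⟨r, _, rfl⟩ := hq
          exact r.2
        · intro hp
          refine ⟨f ⟨p, hp⟩, ?_, rfl⟩
          rw [hN, Finset.mem_image]
          exact ⟨⟨p, hp⟩, Finset.mem_attach _ _, rfl⟩
      have hPQsub : ({P, Q} : Finset (Fin n × Fin n)) ⊆ M := by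
        intro x hx
        rcases Finset.mem_insert.1 hx with h | h
        · rw [h]; exact hPM
        · rw [Finset.mem_singleton.1 h]; exact hQM
      have hNcard : N.card = t - 2 := by
        have := congrArg Finset.card hNmap
        rw [Finset.card_map] at this
        rw [this, Finset.card_sdiff_of_subset hPQsub, hcard,
          Finset.card_insert_of_notMem (by simpa using hPQ), Finset.card_singleton]
      have hNdist : ∀ p ∈ N, ∀ q ∈ N, p ≠ q → p.1 ≠ q.1 ∧ p.2 ≠ q.2 := by
        intro p hp q hq hpq
        have hpm : emb p ∈ M := by
          have : emb p ∈ N.map emb := Finset.mem_map_of_mem emb hp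
          rw [hNmap] at this
          exact (Finset.mem_sdiff.1 this).1
        have hqm : emb q ∈ M := by
          have : emb q ∈ N.map emb := Finset.mem_map_of_mem emb hq
          rw [hNmap] at this
          exact (Finset.mem_sdiff.1 this).1
        have hne : emb p ≠ emb q := fun h => hpq (emb.injective h)
        have := hdist _ hpm _ hqm hne
        exact ⟨fun h => this.1 (congrArg Subtype.val h),
          fun h => this.2 (congrArg Subtype.val h)⟩
      refine ⟨⟨N, hNcard, hNdist⟩, ?_⟩
      apply Subtype.ext
      show N.map emb ∪ {P, Q} = M
      rw [hNmap, Finset.sdiff_union_of_subset hPQsub]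
  rw [← Nat.card_eq_of_bijective G hGbij, hT']
  rw [count_swaps (t - 2), hcard' i i' hi, hcard' j j' hj,
    Nat.descFactorial_eq_factorial_mul_choose]
  ring
end

section
/- Let A : Fin n × Fin n → ℝ with n ≥ 2 and fix 2 ≤ t ≤ n. Then ∑_{M swap of length t} ∑_{(p, q) ∈ M × M, p ≠ q} A p · A q = C(n,t)² · t! · ((t² − t)/(n²(n−1)²)) · [(∑_{(s,τ)} A (s,τ))² − ∑_{s} (∑_{τ} A (s,τ))² − ∑_{τ} (∑_{s} A (s,τ))² + ∑_{(s,τ)} A (s,τ)²]. -/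
open Finset

variable {α β : Type*} [DecidableEq α] [DecidableEq β] [Fintype α] [Fintype β]


lemma card_graphs (s : Finset α) (C : Finset β) :
    (univ.filter (fun M : Finset (α × β) =>
        M.image Prod.fst = s ∧ M.image Prod.snd ⊆ C ∧
        ∀ p ∈ M, ∀ q ∈ M, p ≠ q → p.1 ≠ q.1 ∧ p.2 ≠ q.2)).card
      = C.card.descFactorial s.card := by
  classical
  have hcard : C.card.descFactorial s.card = (univ : Finset (↥s ↪ ↥C)).card := by
    rw [Finset.card_univ, Fintype.card_embedding_eq, Fintype.card_coe, Fintype.card_coe]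
  rw [hcard]
  apply (Finset.card_bij (fun (f : ↥s ↪ ↥C) _ =>
    s.attach.image (fun a : ↥s => (a.1, (f a).1))) ?_ ?_ ?_).symm
  · -- maps into filter
    intro f _
    simp only [mem_filter, mem_univ, true_and]
    refine ⟨?_, ?_, ?_⟩
    · rw [Finset.image_image]
      exact s.attach_image_val
    · intro b hb
      simp only [mem_image, mem_attach, true_and] at hb
      obtain ⟨r, hr, hrb⟩ := hb
      obtain ⟨a, ha⟩ := hr
      subst ha
      simp only at hrb
      subst hrb
      exact (f a).2
    · intro r1 h1 r2 h2 hne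
      simp only [mem_image, mem_attach, true_and] at h1 h2
      obtain ⟨a, ha⟩ := h1
      obtain ⟨b, hb⟩ := h2
      subst ha hb
      have hab : a ≠ b := by rintro rfl; exact hne rfl
      refine ⟨fun h => hab (Subtype.ext h), fun h => hab (f.injective (Subtype.ext h))⟩
  · -- injective
    intro f _ g _ h
    ext a
    have : (a.1, (f a).1) ∈ s.attach.image (fun a : ↥s => (a.1, (g a).1)) := by
      rw [← h]
      exact mem_image_of_mem _ (mem_attach _ _)
    simp only [mem_image, mem_attach, true_and, Prod.mk.injEq] at this
    obtain ⟨b, hb1, hb2⟩ := this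
    have hba : b = a := Subtype.ext hb1
    subst hba
    exact hb2.symm
  · -- surjective
    intro M hM
    simp only [mem_filter, mem_univ, true_and] at hM
    obtain ⟨hfst, hsnd, hswap⟩ := hM
    have hex : ∀ a : ↥s, ∃ b : β, (a.1, b) ∈ M ∧ b ∈ C := by
      intro a
      have h1 : a.1 ∈ M.image Prod.fst := by rw [hfst]; exact a.2
      simp only [mem_image] at h1
      obtain ⟨r, hr, hra⟩ := h1
      refine ⟨r.2, ?_, hsnd (mem_image_of_mem _ hr)⟩
      have : (a.1, r.2) = r := by rw [← hra]
      rwa [this]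
    choose g hg hgC using hex
    have hginj : Function.Injective (fun a : ↥s => (⟨g a, hgC a⟩ : ↥C)) := by
      intro a b hab
      simp only [Subtype.mk.injEq] at hab
      by_contra hne
      have h1 := hswap _ (hg a) _ (hg b) (by simp [Prod.ext_iff, hab]; intro h; exact hne h)
      exact h1.2 hab
    refine ⟨⟨fun a => ⟨g a, hgC a⟩, hginj⟩, mem_univ _, ?_⟩
    apply Finset.Subset.antisymm
    · intro r hr
      simp only [mem_image, mem_attach, true_and, Function.Embedding.coeFn_mk] at hr
      obtain ⟨a, ha⟩ := hr
      rw [← ha]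
      exact hg a
    · intro r hr
      have h1 : r.1 ∈ M.image Prod.fst := mem_image_of_mem _ hr
      rw [hfst] at h1
      simp only [mem_image, mem_attach, true_and, Function.Embedding.coeFn_mk]
      refine ⟨⟨r.1, h1⟩, ?_⟩
      have h2 := hg ⟨r.1, h1⟩
      by_contra hne
      have h3 := hswap _ h2 _ hr (fun h => hne h)
      exact h3.1 rfl

lemma card_swaps (R : Finset α) (C : Finset β) (k : ℕ) :
    (univ.filter (fun M : Finset (α × β) =>
        M ⊆ R ×ˢ C ∧ M.card = k ∧
        ∀ p ∈ M, ∀ q ∈ M, p ≠ q → p.1 ≠ q.1 ∧ p.2 ≠ q.2)).card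
      = R.card.choose k * (C.card.choose k * k.factorial) := by
  classical
  rw [Finset.card_eq_sum_card_fiberwise (f := fun M : Finset (α × β) => M.image Prod.fst)
    (t := R.powersetCard k) ?_]
  · have hfib : ∀ s ∈ R.powersetCard k,
        ((univ.filter (fun M : Finset (α × β) =>
          M ⊆ R ×ˢ C ∧ M.card = k ∧
          ∀ p ∈ M, ∀ q ∈ M, p ≠ q → p.1 ≠ q.1 ∧ p.2 ≠ q.2)).filter
            (fun M => M.image Prod.fst = s)).card = C.card.descFactorial k := by
      intro s hs
      rw [Finset.mem_powersetCard] at hs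
      rw [Finset.filter_filter]
      have : ∀ M : Finset (α × β),
          ((M ⊆ R ×ˢ C ∧ M.card = k ∧
            ∀ p ∈ M, ∀ q ∈ M, p ≠ q → p.1 ≠ q.1 ∧ p.2 ≠ q.2) ∧ M.image Prod.fst = s)
          ↔ (M.image Prod.fst = s ∧ M.image Prod.snd ⊆ C ∧
            ∀ p ∈ M, ∀ q ∈ M, p ≠ q → p.1 ≠ q.1 ∧ p.2 ≠ q.2) := by
        intro M
        constructor
        · rintro ⟨⟨hsub, hcard, hswap⟩, himg⟩
          refine ⟨himg, ?_, hswap⟩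
          intro b hb
          simp only [mem_image] at hb
          obtain ⟨r, hr, hrb⟩ := hb
          subst hrb
          exact (Finset.mem_product.mp (hsub hr)).2
        · rintro ⟨himg, hsnd, hswap⟩
          have hinj : Set.InjOn Prod.fst (M : Set (α × β)) := by
            intro a ha b hb hab
            by_contra hne
            exact (hswap a ha b hb hne).1 hab
          refine ⟨⟨?_, ?_, hswap⟩, himg⟩
          · intro r hr
            rw [Finset.mem_product]
            exact ⟨hs.1 (himg ▸ mem_image_of_mem _ hr), hsnd (mem_image_of_mem _ hr)⟩
          · rw [← hs.2, ← himg, Finset.card_image_of_injOn hinj]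
      rw [Finset.filter_congr (fun M _ => this M), ← hs.2]
      exact card_graphs s C
    rw [Finset.sum_congr rfl hfib, Finset.sum_const, Finset.card_powersetCard,
      Nat.descFactorial_eq_factorial_mul_choose, smul_eq_mul]
    ring
  · intro M hM
    simp only [mem_coe, mem_filter, mem_univ, true_and] at hM
    obtain ⟨hsub, hcard, hswap⟩ := hM
    rw [Finset.mem_coe, Finset.mem_powersetCard]
    constructor
    · intro a ha
      simp only [mem_image] at ha
      obtain ⟨r, hr, hra⟩ := ha
      subst hra
      exact (Finset.mem_product.mp (hsub hr)).1
    · rw [Finset.card_image_of_injOn, hcard]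
      intro a ha b hb hab
      by_contra hne
      exact (hswap a ha b hb hne).1 hab

lemma card_swaps_containing (p q : α × β) (h1 : p.1 ≠ q.1) (h2 : p.2 ≠ q.2)
    (t : ℕ) (ht : 2 ≤ t) :
    ((univ.filter (fun M : Finset (α × β) =>
        M.card = t ∧ ∀ r ∈ M, ∀ r' ∈ M, r ≠ r' → r.1 ≠ r'.1 ∧ r.2 ≠ r'.2)).filter
      (fun M => p ∈ M ∧ q ∈ M)).card
      = (Fintype.card α - 2).choose (t - 2) *
          ((Fintype.card β - 2).choose (t - 2) * (t - 2).factorial) := by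
  classical
  rw [Finset.filter_filter]
  have hpq : p ≠ q := fun h => h1 (by rw [h])
  set R : Finset α := univ \ {p.1, q.1} with hR
  set C : Finset β := univ \ {p.2, q.2} with hC
  have hRcard : R.card = Fintype.card α - 2 := by
    rw [hR, Finset.card_sdiff_of_subset (by simp), Finset.card_univ, Finset.card_pair h1]
  have hCcard : C.card = Fintype.card β - 2 := by
    rw [hC, Finset.card_sdiff_of_subset (by simp), Finset.card_univ, Finset.card_pair h2]
  rw [← hRcard, ← hCcard, ← card_swaps R C (t - 2)]
  refine Finset.card_bij' (fun M _ => M \ {p, q})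
    (fun M' _ => insert p (insert q M')) ?hi ?hj ?left ?right
  case hi => -- i maps into target
    intro M hM
    simp only [mem_filter, mem_univ, true_and] at hM ⊢
    obtain ⟨⟨hcard, hswap⟩, hp, hq⟩ := hM
    refine ⟨?_, ?_, ?_⟩
    · intro r hr
      rw [Finset.mem_sdiff, Finset.mem_insert, Finset.mem_singleton] at hr
      push_neg at hr
      obtain ⟨hrM, hrp, hrq⟩ := hr
      rw [Finset.mem_product, hR, hC]
      simp only [Finset.mem_sdiff, Finset.mem_univ, true_and, Finset.mem_insert,
        Finset.mem_singleton]
      push_neg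
      exact ⟨⟨(hswap r hrM p hp hrp).1, (hswap r hrM q hq hrq).1⟩,
        ⟨(hswap r hrM p hp hrp).2, (hswap r hrM q hq hrq).2⟩⟩
    · have hsub2 : ({p, q} : Finset (α × β)) ⊆ M := by
        intro x hx
        rw [Finset.mem_insert, Finset.mem_singleton] at hx
        rcases hx with rfl | rfl <;> assumption
      rw [Finset.card_sdiff_of_subset hsub2, Finset.card_pair hpq, hcard]
    · intro r hr r' hr' hne
      rw [Finset.mem_sdiff] at hr hr'
      exact hswap r hr.1 r' hr'.1 hne
  case hj => -- j maps into source
    intro M' hM'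
    simp only [mem_filter, mem_univ, true_and] at hM' ⊢
    obtain ⟨hsub, hcard, hswap⟩ := hM'
    have hmem : ∀ r ∈ M', (r.1 ≠ p.1 ∧ r.1 ≠ q.1) ∧ (r.2 ≠ p.2 ∧ r.2 ≠ q.2) := by
      intro r hr
      have := Finset.mem_product.mp (hsub hr)
      rw [hR, hC] at this
      simp only [Finset.mem_sdiff, Finset.mem_univ, true_and, Finset.mem_insert,
        Finset.mem_singleton] at this
      push_neg at this
      exact this
    have hpM' : p ∉ M' := fun h => ((hmem p h).1.1 rfl)
    have hqM' : q ∉ M' := fun h => ((hmem q h).1.2 rfl)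
    refine ⟨⟨?_, ?_⟩, ?_, ?_⟩
    · rw [Finset.card_insert_of_notMem (by
        simp only [Finset.mem_insert]
        push_neg
        exact ⟨hpq, hpM'⟩),
        Finset.card_insert_of_notMem hqM', hcard]
      omega
    · intro r hr r' hr' hne
      simp only [Finset.mem_insert] at hr hr'
      rcases hr with rfl | rfl | hr <;> rcases hr' with rfl | rfl | hr'
      · exact absurd rfl hne
      · exact ⟨h1, h2⟩
      · exact ⟨((hmem r' hr').1.1).symm, ((hmem r' hr').2.1).symm⟩
      · exact ⟨h1.symm, h2.symm⟩
      · exact absurd rfl hne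
      · exact ⟨((hmem r' hr').1.2).symm, ((hmem r' hr').2.2).symm⟩
      · exact ⟨(hmem r hr).1.1, (hmem r hr).2.1⟩
      · exact ⟨(hmem r hr).1.2, (hmem r hr).2.2⟩
      · exact hswap r hr r' hr' hne
    · exact Finset.mem_insert_self _ _
    · exact Finset.mem_insert_of_mem (Finset.mem_insert_self _ _)
  case left => -- left inverse
    intro M hM
    simp only [mem_filter, mem_univ, true_and] at hM
    obtain ⟨⟨hcard, hswap⟩, hp, hq⟩ := hM
    ext r
    simp only [Finset.mem_insert, Finset.mem_sdiff, Finset.mem_singleton]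
    constructor
    · rintro (rfl | rfl | ⟨h, _⟩) <;> first | exact hp | exact hq | exact h
    · intro hr
      by_cases hrp : r = p
      · exact Or.inl hrp
      by_cases hrq : r = q
      · exact Or.inr (Or.inl hrq)
      · exact Or.inr (Or.inr ⟨hr, by simp [hrp, hrq]⟩)
  case right => -- right inverse
    intro M' hM'
    simp only [mem_filter, mem_univ, true_and] at hM'
    obtain ⟨hsub, hcard, hswap⟩ := hM'
    have hmem : ∀ r ∈ M', r ≠ p ∧ r ≠ q := by
      intro r hr
      have := Finset.mem_product.mp (hsub hr)
      rw [hR] at this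
      simp only [Finset.mem_sdiff, Finset.mem_univ, true_and, Finset.mem_insert,
        Finset.mem_singleton] at this
      push_neg at this
      exact ⟨fun h => this.1.1 (by rw [h]), fun h => this.1.2 (by rw [h])⟩
    ext r
    simp only [Finset.mem_sdiff, Finset.mem_insert, Finset.mem_singleton]
    constructor
    · rintro ⟨rfl | rfl | hr, hne⟩
      · exact absurd (Or.inl rfl) hne
      · exact absurd (Or.inr rfl) hne
      · exact hr
    · intro hr
      exact ⟨Or.inr (Or.inr hr), by push_neg; exact hmem r hr⟩

lemma card_swaps_containing_zero (p q : α × β) (hpq : p ≠ q)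
    (h : p.1 = q.1 ∨ p.2 = q.2) (t : ℕ) :
    ((univ.filter (fun M : Finset (α × β) =>
        M.card = t ∧ ∀ r ∈ M, ∀ r' ∈ M, r ≠ r' → r.1 ≠ r'.1 ∧ r.2 ≠ r'.2)).filter
      (fun M => p ∈ M ∧ q ∈ M)).card = 0 := by
  rw [Finset.card_eq_zero, Finset.filter_eq_empty_iff]
  intro M hM
  rw [Finset.mem_filter] at hM
  rintro ⟨hp, hq⟩
  have := hM.2.2 p hp q hq hpq
  rcases h with h | h
  · exact this.1 h
  · exact this.2 h

lemma sum_compat {n : ℕ} (A : Fin n × Fin n → ℝ) :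
    ∑ pq ∈ (univ ×ˢ univ : Finset ((Fin n × Fin n) × (Fin n × Fin n))),
      (if pq.1.1 ≠ pq.2.1 ∧ pq.1.2 ≠ pq.2.2 then A pq.1 * A pq.2 else 0)
    = (∑ p, A p) ^ 2 - (∑ s, (∑ τ, A (s, τ)) ^ 2) - (∑ τ, (∑ s, A (s, τ)) ^ 2)
        + ∑ p, A p ^ 2 := by
  have key : ∀ pq : (Fin n × Fin n) × (Fin n × Fin n),
      (if pq.1.1 ≠ pq.2.1 ∧ pq.1.2 ≠ pq.2.2 then A pq.1 * A pq.2 else 0)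
      = A pq.1 * A pq.2 - (if pq.1.1 = pq.2.1 then A pq.1 * A pq.2 else 0)
        - (if pq.1.2 = pq.2.2 then A pq.1 * A pq.2 else 0)
        + (if pq.1 = pq.2 then A pq.1 * A pq.2 else 0) := by
    intro pq
    by_cases h1 : pq.1.1 = pq.2.1 <;> by_cases h2 : pq.1.2 = pq.2.2 <;>
      simp [h1, h2, Prod.ext_iff] <;> ring
  rw [Finset.sum_congr rfl (fun pq _ => key pq)]
  rw [Finset.sum_add_distrib, Finset.sum_sub_distrib, Finset.sum_sub_distrib]
  have hS1 : ∑ pq ∈ (univ ×ˢ univ : Finset ((Fin n × Fin n) × (Fin n × Fin n))),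
      A pq.1 * A pq.2 = (∑ p, A p) ^ 2 := by
    rw [Finset.sum_product, sq]
    rw [Finset.sum_mul_sum]
  have hS4 : ∑ pq ∈ (univ ×ˢ univ : Finset ((Fin n × Fin n) × (Fin n × Fin n))),
      (if pq.1 = pq.2 then A pq.1 * A pq.2 else 0) = ∑ p, A p ^ 2 := by
    rw [Finset.sum_product]
    simp [Finset.sum_ite_eq, sq]
  have hS2 : ∑ pq ∈ (univ ×ˢ univ : Finset ((Fin n × Fin n) × (Fin n × Fin n))),
      (if pq.1.1 = pq.2.1 then A pq.1 * A pq.2 else 0) = ∑ s, (∑ τ, A (s, τ)) ^ 2 := by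
    rw [Finset.sum_product]
    rw [Fintype.sum_prod_type]
    have : ∀ (s : Fin n) (τ : Fin n),
        ∑ q : Fin n × Fin n, (if s = q.1 then A (s, τ) * A q else 0)
        = A (s, τ) * ∑ τ', A (s, τ') := by
      intro s τ
      rw [Fintype.sum_prod_type]
      have hpull : ∀ x : Fin n, (∑ x_1 : Fin n, if s = x then A (s, τ) * A (x, x_1) else 0)
          = if s = x then (∑ x_1 : Fin n, A (s, τ) * A (x, x_1)) else 0 := by
        intro x; split_ifs <;> simp
      simp [hpull, Finset.sum_ite_eq, Finset.mul_sum]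
    simp only [this]
    have : ∀ s : Fin n, ∑ τ, A (s, τ) * ∑ τ', A (s, τ') = (∑ τ, A (s, τ)) ^ 2 := by
      intro s
      rw [← Finset.sum_mul, sq]
    simp only [this]
  have hS3 : ∑ pq ∈ (univ ×ˢ univ : Finset ((Fin n × Fin n) × (Fin n × Fin n))),
      (if pq.1.2 = pq.2.2 then A pq.1 * A pq.2 else 0) = ∑ τ, (∑ s, A (s, τ)) ^ 2 := by
    rw [Finset.sum_product]
    rw [Fintype.sum_prod_type]
    rw [Finset.sum_comm]
    have : ∀ (τ : Fin n) (s : Fin n),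
        ∑ q : Fin n × Fin n, (if τ = q.2 then A (s, τ) * A q else 0)
        = A (s, τ) * ∑ s', A (s', τ) := by
      intro τ s
      rw [Fintype.sum_prod_type]
      rw [Finset.sum_comm]
      have hpull : ∀ x : Fin n, (∑ x_1 : Fin n, if τ = x then A (s, τ) * A (x_1, x) else 0)
          = if τ = x then (∑ x_1 : Fin n, A (s, τ) * A (x_1, x)) else 0 := by
        intro x; split_ifs <;> simp
      simp [hpull, Finset.sum_ite_eq, Finset.mul_sum]
    simp only [this]
    have : ∀ τ : Fin n, ∑ s, A (s, τ) * ∑ s', A (s', τ) = (∑ s, A (s, τ)) ^ 2 := by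
      intro τ
      rw [← Finset.sum_mul, sq]
    simp only [this]
  rw [hS1, hS2, hS3, hS4]

lemma coeff_eq (n t : ℕ) (hn : 2 ≤ n) (ht1 : 2 ≤ t) :
    (((n - 2).choose (t - 2) * ((n - 2).choose (t - 2) * (t - 2).factorial) : ℕ) : ℝ)
    = ((n.choose t ^ 2 * t.factorial : ℕ) : ℝ) *
        (((t : ℝ) ^ 2 - t) / ((n : ℝ) ^ 2 * ((n : ℝ) - 1) ^ 2)) := by
  obtain ⟨m, rfl⟩ : ∃ m, n = m + 2 := ⟨n - 2, by omega⟩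
  obtain ⟨u, rfl⟩ : ∃ u, t = u + 2 := ⟨t - 2, by omega⟩
  simp only [Nat.add_sub_cancel]
  have h1 := Nat.add_one_mul_choose_eq (m + 1) (u + 1)
  have h2 := Nat.add_one_mul_choose_eq m u
  have h1' : ((m : ℝ) + 2) * ((m + 1).choose (u + 1)) = ((m + 2).choose (u + 2)) * ((u : ℝ) + 2) := by
    exact_mod_cast congrArg (Nat.cast (R := ℝ)) h1
  have h2' : ((m : ℝ) + 1) * (m.choose u) = ((m + 1).choose (u + 1)) * ((u : ℝ) + 1) := by
    exact_mod_cast congrArg (Nat.cast (R := ℝ)) h2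
  have hfact : ((u + 2).factorial : ℝ) = ((u : ℝ) + 2) * ((u : ℝ) + 1) * (u.factorial : ℝ) := by
    push_cast [Nat.factorial_succ]
    ring
  have hden : ((m : ℝ) + 2) ^ 2 * ((m : ℝ) + 2 - 1) ^ 2 ≠ 0 := by
    have h : ((m : ℝ) + 2 - 1) = (m : ℝ) + 1 := by ring
    rw [h]; positivity
  push_cast
  rw [mul_div_assoc', eq_div_iff hden]
  linear_combination ((u.factorial : ℝ) * (((m : ℝ) + 2) * ((m : ℝ) + 1) * (m.choose u)
      + ((m + 2).choose (u + 2) : ℝ) * ((u : ℝ) + 2) * ((u : ℝ) + 1))) *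
      (((u : ℝ) + 1) * h1' + ((m : ℝ) + 2) * h2')
    - (((m + 2).choose (u + 2) : ℝ))^2 * (((u : ℝ) + 2)^2 - ((u : ℝ) + 2)) * hfact

/-- Summed over all swaps `M` of length `t`, the sum of `A p · A q` over ordered
pairs of distinct positions `p ≠ q` in `M` equals
`C(n,t)² · t! · ((t² − t)/(n²(n−1)²)) · [(∑ A)² − ∑_s(∑_τ A)² − ∑_τ(∑_s A)² + ∑ A²]`. -/
theorem swap_cross_terms_sum (n t : ℕ) (hn : 2 ≤ n) (ht1 : 2 ≤ t) (ht2 : t ≤ n)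
    (A : Fin n × Fin n → ℝ) :
    ∑ M ∈ Finset.univ.filter (fun M : Finset (Fin n × Fin n) =>
        M.card = t ∧ ∀ p ∈ M, ∀ q ∈ M, p ≠ q → p.1 ≠ q.1 ∧ p.2 ≠ q.2),
      ∑ pq ∈ (M ×ˢ M).filter (fun pq => pq.1 ≠ pq.2), A pq.1 * A pq.2
      = (n.choose t ^ 2 * t.factorial : ℕ) *
          (((t : ℝ) ^ 2 - t) / ((n : ℝ) ^ 2 * ((n : ℝ) - 1) ^ 2)) *
          ((∑ p, A p) ^ 2 - (∑ s, (∑ τ, A (s, τ)) ^ 2) - (∑ τ, (∑ s, A (s, τ)) ^ 2)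
            + ∑ p, A p ^ 2) := by
  have step1 : ∀ M : Finset (Fin n × Fin n),
      ∑ pq ∈ (M ×ˢ M).filter (fun pq => pq.1 ≠ pq.2), A pq.1 * A pq.2
      = ∑ pq ∈ (univ ×ˢ univ : Finset ((Fin n × Fin n) × (Fin n × Fin n))),
          (if pq.1 ∈ M ∧ pq.2 ∈ M ∧ pq.1 ≠ pq.2 then A pq.1 * A pq.2 else 0) := by
    intro M
    rw [← Finset.sum_filter]
    congr 1
    ext pq
    simp only [Finset.mem_filter, Finset.mem_product, Finset.mem_univ, true_and]
    tauto
  rw [Finset.sum_congr rfl (fun M _ => step1 M), Finset.sum_comm]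
  have step2 : ∀ pq : (Fin n × Fin n) × (Fin n × Fin n),
      ∑ M ∈ Finset.univ.filter (fun M : Finset (Fin n × Fin n) =>
          M.card = t ∧ ∀ p ∈ M, ∀ q ∈ M, p ≠ q → p.1 ≠ q.1 ∧ p.2 ≠ q.2),
        (if pq.1 ∈ M ∧ pq.2 ∈ M ∧ pq.1 ≠ pq.2 then A pq.1 * A pq.2 else 0)
      = (if pq.1.1 ≠ pq.2.1 ∧ pq.1.2 ≠ pq.2.2 then
          (((n - 2).choose (t - 2) * ((n - 2).choose (t - 2) * (t - 2).factorial) : ℕ) : ℝ)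
          else 0) * (A pq.1 * A pq.2) := by
    intro pq
    rw [← Finset.sum_filter, Finset.sum_const, nsmul_eq_mul]
    congr 1
    by_cases hcompat : pq.1.1 ≠ pq.2.1 ∧ pq.1.2 ≠ pq.2.2
    · rw [if_pos hcompat]
      have hne : pq.1 ≠ pq.2 := fun h => hcompat.1 (by rw [h])
      norm_cast
      have hfc : (Finset.univ.filter (fun M : Finset (Fin n × Fin n) =>
            M.card = t ∧ ∀ p ∈ M, ∀ q ∈ M, p ≠ q → p.1 ≠ q.1 ∧ p.2 ≠ q.2)).filter
              (fun M => pq.1 ∈ M ∧ pq.2 ∈ M ∧ pq.1 ≠ pq.2)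
          = (Finset.univ.filter (fun M : Finset (Fin n × Fin n) =>
            M.card = t ∧ ∀ p ∈ M, ∀ q ∈ M, p ≠ q → p.1 ≠ q.1 ∧ p.2 ≠ q.2)).filter
              (fun M => pq.1 ∈ M ∧ pq.2 ∈ M) := by
        apply Finset.filter_congr
        intro M _
        tauto
      rw [hfc, card_swaps_containing pq.1 pq.2 hcompat.1 hcompat.2 t ht1, Fintype.card_fin]
    · rw [if_neg hcompat]
      norm_cast
      by_cases heq : pq.1 = pq.2
      · rw [Finset.card_eq_zero, Finset.filter_eq_empty_iff]
        rintro M - ⟨-, -, h⟩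
        exact h heq
      · push_neg at hcompat
        have h' : pq.1.1 = pq.2.1 ∨ pq.1.2 = pq.2.2 := by
          by_cases h1 : pq.1.1 = pq.2.1
          · exact Or.inl h1
          · exact Or.inr (hcompat h1)
        have hfc : (Finset.univ.filter (fun M : Finset (Fin n × Fin n) =>
              M.card = t ∧ ∀ p ∈ M, ∀ q ∈ M, p ≠ q → p.1 ≠ q.1 ∧ p.2 ≠ q.2)).filter
                (fun M => pq.1 ∈ M ∧ pq.2 ∈ M ∧ pq.1 ≠ pq.2)
            = (Finset.univ.filter (fun M : Finset (Fin n × Fin n) =>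
              M.card = t ∧ ∀ p ∈ M, ∀ q ∈ M, p ≠ q → p.1 ≠ q.1 ∧ p.2 ≠ q.2)).filter
                (fun M => pq.1 ∈ M ∧ pq.2 ∈ M) := by
          apply Finset.filter_congr
          intro M _
          tauto
        rw [hfc, card_swaps_containing_zero pq.1 pq.2 heq h' t]
  rw [Finset.sum_congr rfl (fun pq _ => step2 pq)]
  have step3 : ∀ pq : (Fin n × Fin n) × (Fin n × Fin n),
      (if pq.1.1 ≠ pq.2.1 ∧ pq.1.2 ≠ pq.2.2 then
          (((n - 2).choose (t - 2) * ((n - 2).choose (t - 2) * (t - 2).factorial) : ℕ) : ℝ)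
          else 0) * (A pq.1 * A pq.2)
      = (((n - 2).choose (t - 2) * ((n - 2).choose (t - 2) * (t - 2).factorial) : ℕ) : ℝ)
          * (if pq.1.1 ≠ pq.2.1 ∧ pq.1.2 ≠ pq.2.2 then A pq.1 * A pq.2 else 0) := by
    intro pq
    split_ifs <;> ring
  rw [Finset.sum_congr rfl (fun pq _ => step3 pq), ← Finset.mul_sum, sum_compat A,
    coeff_eq n t hn ht1]
end
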